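/- arXiv:1806.04188 — 5 statements merged into one kernel-verified Lean document; each statement's English description precedes it below -/
import Mathlib

section
/- For every integer k, there is a matroid M in ℰ₃ containing neither I₃ nor F₇ as an induced restriction such that χ(M) ≥ k. -/
/-- A simple binary matroid `M = (E, G)`: a dimension `n` together with a ground set `E`
of nonzero vectors of `𝔽₂ⁿ` (the points of `G = 𝔽₂ⁿ \ {0}`). -/
structure BinMatroid where
  dim : ℕ
  E : Set (Fin dim → ZMod 2)
  zero_not_mem : 0 ∉ E

namespace BinMatroid

/-- `M.HasIR N` : `M` contains `N` as an induced restriction, i.e. there is an injective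
linear map `φ` with `φ(E(N)) = E(M) ∩ (φ(G') \ {0})`. -/
def HasIR (M N : BinMatroid) : Prop :=
  ∃ φ : (Fin N.dim → ZMod 2) →ₗ[ZMod 2] (Fin M.dim → ZMod 2),
    Function.Injective φ ∧ φ '' N.E = M.E ∩ (Set.range φ \ {0})

/-- Isomorphism of binary matroids: a bijective induced embedding. -/
def Iso (M N : BinMatroid) : Prop :=
  ∃ φ : (Fin N.dim → ZMod 2) →ₗ[ZMod 2] (Fin M.dim → ZMod 2),
    Function.Bijective φ ∧ φ '' N.E = M.E ∩ (Set.range φ \ {0})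

/-- The critical number of the induced restriction of the ground set `E` to the flat of
the subspace `F`: the least `k` such that some flat of `F` of dimension `dim F - k`
is disjoint from `E`. -/
noncomputable def critNumRes {n : ℕ} (E : Set (Fin n → ZMod 2))
    (F : Submodule (ZMod 2) (Fin n → ZMod 2)) : ℕ :=
  sInf {k : ℕ | ∃ W : Submodule (ZMod 2) (Fin n → ZMod 2), W ≤ F ∧
    Module.finrank (ZMod 2) W = Module.finrank (ZMod 2) F - k ∧
    Disjoint ((W : Set (Fin n → ZMod 2)) \ {0}) E}

/-- The critical number `χ(M)`: the least `k ≥ 0` such that some flat of dimension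
`n - k` is disjoint from `E`. -/
noncomputable def critNum (M : BinMatroid) : ℕ :=
  sInf {k : ℕ | ∃ W : Submodule (ZMod 2) (Fin M.dim → ZMod 2),
    Module.finrank (ZMod 2) W = M.dim - k ∧
    Disjoint ((W : Set (Fin M.dim → ZMod 2)) \ {0}) M.E}

/-- `M ∈ ℰ_k` : every induced restriction of `M` to a flat of dimension at least `k`
has even size. -/
def MemE (k : ℕ) (M : BinMatroid) : Prop :=
  ∀ W : Submodule (ZMod 2) (Fin M.dim → ZMod 2),
    k ≤ Module.finrank (ZMod 2) W →
    Even (M.E ∩ ((W : Set (Fin M.dim → ZMod 2)) \ {0})).ncard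

/-- `M` is full-rank: `E` spans `𝔽₂ⁿ`. -/
def FullRank (M : BinMatroid) : Prop :=
  Submodule.span (ZMod 2) M.E = ⊤

/-- `M` is (isomorphic to) the doubling of `M₀`: `M₀` is identified, via an injective
linear map `φ`, with the restriction of `M` to a hyperplane `H = range φ`, there is
`w ∈ G − (E ∪ H)`, and `E = (E ∩ H) ∪ (w + (E ∩ H))`. -/
def IsDoublingOf (M M₀ : BinMatroid) : Prop :=
  M.dim = M₀.dim + 1 ∧
  ∃ φ : (Fin M₀.dim → ZMod 2) →ₗ[ZMod 2] (Fin M.dim → ZMod 2),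
    Function.Injective φ ∧
    ∃ w : Fin M.dim → ZMod 2, w ≠ 0 ∧ w ∉ Set.range φ ∧ w ∉ M.E ∧
      M.E = φ '' M₀.E ∪ (fun x => w + x) '' (φ '' M₀.E)

/-- `M` arises from `M₀` by a (possibly empty) sequence of doublings. -/
def ArisesByDoublings (M M₀ : BinMatroid) : Prop :=
  ∃ M' : BinMatroid,
    Relation.ReflTransGen (fun A B => IsDoublingOf B A) M₀ M' ∧ M.Iso M'

/-- `M` is (a copy of) `AG°(t−1, 2)`, the matroid `((G − H) ∪ {x}, G)` with `H` a
hyperplane of `G` and `x ∈ H`, where `t = M.dim`. -/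
def IsAGo (M : BinMatroid) : Prop :=
  ∃ H : Submodule (ZMod 2) (Fin M.dim → ZMod 2),
    Module.finrank (ZMod 2) H + 1 = M.dim ∧
    ∃ x ∈ (H : Set (Fin M.dim → ZMod 2)) \ {0},
      M.E = ({v | v ≠ 0} \ (H : Set (Fin M.dim → ZMod 2))) ∪ {x}

/-- `M` is a Bose–Burton geometry of order `k`: `E = G − F` for a flat `F` of
dimension `n − k`. -/
def IsBoseBurton (M : BinMatroid) (k : ℕ) : Prop :=
  k ≤ M.dim ∧ ∃ W : Submodule (ZMod 2) (Fin M.dim → ZMod 2),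
    Module.finrank (ZMod 2) W = M.dim - k ∧
    M.E = {v | v ≠ 0} \ (W : Set (Fin M.dim → ZMod 2))

/-- The ground set `E` (of a matroid of the ambient dimension `n`) is the semidoubling
of its restriction to the hyperplane `H₁` with respect to the hyperplane `H₀` of `H₁`:
there is `w ∈ G − (E ∪ H₁)` with `|{x, x+w} ∩ E| ∈ {0, 2}` for every `x ∈ H₀` and
`|{x, x+w} ∩ E| = 1` for every `x ∈ H₁ − H₀`. -/
def IsSemidoublingWrt {n : ℕ} (E : Set (Fin n → ZMod 2))
    (H₁ H₀ : Submodule (ZMod 2) (Fin n → ZMod 2)) : Prop :=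
  H₀ ≤ H₁ ∧ Module.finrank (ZMod 2) H₀ + 1 = Module.finrank (ZMod 2) H₁ ∧
  ∃ w : Fin n → ZMod 2, w ≠ 0 ∧ w ∉ H₁ ∧ w ∉ E ∧
    (∀ x ∈ (H₀ : Set (Fin n → ZMod 2)) \ {0},
      (({x, x + w} : Set (Fin n → ZMod 2)) ∩ E).ncard = 0 ∨
      (({x, x + w} : Set (Fin n → ZMod 2)) ∩ E).ncard = 2) ∧
    (∀ x ∈ (H₁ : Set (Fin n → ZMod 2)) \ (H₀ : Set (Fin n → ZMod 2)),
      (({x, x + w} : Set (Fin n → ZMod 2)) ∩ E).ncard = 1)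

/-- The ground set `E` is a semidoubling of its restriction to the hyperplane `H₁`
(with respect to some hyperplane `H₀` of `H₁`). -/
def IsSemidoublingOfRes {n : ℕ} (E : Set (Fin n → ZMod 2))
    (H₁ : Submodule (ZMod 2) (Fin n → ZMod 2)) : Prop :=
  ∃ H₀ : Submodule (ZMod 2) (Fin n → ZMod 2), IsSemidoublingWrt E H₁ H₀

/-- `M` is (isomorphic to) a semidoubling of `M₀`: `M₀` is identified, via an injective
linear map `φ`, with the restriction of `M` to the hyperplane `range φ`, and `M` is a
semidoubling of that restriction. -/
def IsSemidoublingOf (M M₀ : BinMatroid) : Prop :=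
  M.dim = M₀.dim + 1 ∧
  ∃ φ : (Fin M₀.dim → ZMod 2) →ₗ[ZMod 2] (Fin M.dim → ZMod 2),
    Function.Injective φ ∧
    φ '' M₀.E = M.E ∩ (Set.range φ \ {0}) ∧
    IsSemidoublingOfRes M.E (LinearMap.range φ)

/-- `M` arises from `M₀` by a (possibly empty) sequence of semidoublings. -/
def ArisesBySemidoublings (M M₀ : BinMatroid) : Prop :=
  ∃ M' : BinMatroid,
    Relation.ReflTransGen (fun A B => IsSemidoublingOf B A) M₀ M' ∧ M.Iso M'

end BinMatroid

/-- A triangle of `G`: a set `{x, y, z}` of three distinct nonzero vectors with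
`x + y + z = 0`. -/
def IsTriangle {n : ℕ} (T : Set (Fin n → ZMod 2)) : Prop :=
  ∃ x y z : Fin n → ZMod 2, x ≠ 0 ∧ y ≠ 0 ∧ z ≠ 0 ∧
    x ≠ y ∧ x ≠ z ∧ y ≠ z ∧ x + y + z = 0 ∧ T = {x, y, z}

/-- `I₃`, the claw: the 3-dimensional matroid whose ground set is the three standard
basis vectors of `𝔽₂³`. -/
def I3 : BinMatroid where
  dim := 3
  E := Set.range fun i : Fin 3 => (Pi.single i 1 : Fin 3 → ZMod 2)
  zero_not_mem := by
    rintro ⟨i, hi⟩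
    have := congrFun hi i
    simp [Pi.single_eq_same] at this

/-- `F₇`, the Fano plane: the 3-dimensional matroid whose ground set is all of
`𝔽₂³ \ {0}`. -/
def F7 : BinMatroid where
  dim := 3
  E := {v | v ≠ 0}
  zero_not_mem := by simp

/-- `K₅`: the 4-dimensional matroid whose ground set is the set of vectors of Hamming
weight 1 or 2 in `𝔽₂⁴`. -/
def K5 : BinMatroid where
  dim := 4
  E := {v | hammingNorm v = 1 ∨ hammingNorm v = 2}
  zero_not_mem := by
    intro h
    simp only [Set.mem_setOf_eq, hammingNorm_zero] at h
    omega

/-!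
Take `E = {x ∈ 𝔽₂^{2k} : Q x = 1}` for the hyperbolic quadratic form
`Q x = ∑ᵢ xᵢ x_{k+i}`. On a flat `W` of dimension at least 3, each product `xᵢ x_{k+i}` is
invariant under translation by some nonzero `h ∈ W` with `hᵢ = h_{k+i} = 0`, so it sums to
zero over `W`; hence `∑_{x ∈ W} Q x = 0`, that is, `|E ∩ W|` is even. In particular no
3-dimensional flat meets `E` in 3 or 7 points. A flat disjoint from `E` is totally singular
for `Q`, hence totally isotropic for the nondegenerate polar form of `Q`, so its dimension is
at most `k`, which gives `χ(M) ≥ k`.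
-/

open Module

section Parity

variable {V : Type*} [AddCommGroup V] [Module (ZMod 2) V] [Fintype V]

theorem sum_eq_zero_of_periodic (ψ : V → ZMod 2) {h : V} (hh : h ≠ 0)
    (hψ : Function.Periodic ψ h) : ∑ x, ψ x = 0 :=
  Finset.sum_ninvolution (· + h) (fun x => by rw [hψ, ZModModule.add_self])
    (fun x _ => by simpa using hh) (fun _ => Finset.mem_univ _)
    (fun x => by rw [add_assoc, ZModModule.add_self, add_zero])

theorem sum_mul_eq_zero_of_three_le_finrank (f g : V →ₗ[ZMod 2] ZMod 2)
    (hV : 3 ≤ finrank (ZMod 2) V) : ∑ x, f x * g x = 0 := by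
  have hker : LinearMap.ker (f.prod g) ≠ ⊥ := by
    intro hbot
    have hrange : finrank (ZMod 2) (LinearMap.range (f.prod g)) ≤ 2 :=
      (Submodule.finrank_le _).trans (by simp)
    have := LinearMap.finrank_range_add_finrank_ker (f.prod g)
    rw [hbot, finrank_bot] at this
    omega
  obtain ⟨h, hh, hne⟩ := Submodule.exists_mem_ne_zero_of_ne_bot hker
  obtain ⟨hf, hg⟩ : f h = 0 ∧ g h = 0 := by simpa using hh
  exact sum_eq_zero_of_periodic _ hne fun x => by simp [hf, hg]

end Parity

theorem even_ncard_setOf_eq_one_of_sum_eq_zero {α : Type*} [Fintype α] (ψ : α → ZMod 2)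
    (hψ : ∑ x, ψ x = 0) : Even {x | ψ x = 1}.ncard := by
  classical
  have hind : ∀ a : ZMod 2, (if a = 1 then 1 else 0) = a := by decide
  rw [Set.ncard_eq_toFinset_card', Set.toFinset_ofPred, even_iff_two_dvd,
    ← ZMod.natCast_eq_zero_iff, Finset.natCast_card_filter]
  simpa only [hind] using hψ

theorem QuadraticMap.polarBilin_isRefl {R M N : Type*} [CommRing R] [AddCommGroup M]
    [Module R M] [AddCommGroup N] [Module R N] (Q : QuadraticMap R M N) :
    Q.polarBilin.IsRefl := fun x y h => by
  rwa [polarBilin_apply_apply, polar_comm, ← polarBilin_apply_apply]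

theorem QuadraticMap.two_mul_finrank_le_of_forall_mem_eq_zero {K V : Type*} [Field K]
    [AddCommGroup V] [Module K V] [FiniteDimensional K V] (Q : QuadraticForm K V)
    (hQ : Q.polarBilin.Nondegenerate) {W : Submodule K V} (hW : ∀ x ∈ W, Q x = 0) :
    2 * finrank K W ≤ finrank K V := by
  have hWW : W ≤ LinearMap.BilinForm.orthogonal Q.polarBilin W := fun y hy => by
    refine LinearMap.BilinForm.mem_orthogonal_iff.2 fun x hx => ?_
    rw [polarBilin_apply_apply, polar, hW _ (W.add_mem hx hy), hW x hx, hW y hy, sub_zero,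
      sub_zero]
  have := Submodule.finrank_mono hWW
  rw [LinearMap.BilinForm.finrank_orthogonal hQ] at this
  have := Submodule.finrank_le W
  omega

theorem Fin.castAdd_ne_addNat {m : ℕ} (i j : Fin m) : Fin.castAdd m i ≠ j.addNat m := by
  simp only [ne_eq, Fin.ext_iff, Fin.val_castAdd, Fin.val_addNat]
  omega

section Hyperbolic

variable (k : ℕ)

def hyperbolicPairing : LinearMap.BilinForm (ZMod 2) (Fin (k + k) → ZMod 2) :=
  ∑ i : Fin k, (LinearMap.mul (ZMod 2) (ZMod 2)).compl₁₂
    (LinearMap.proj (Fin.castAdd k i)) (LinearMap.proj (Fin.natAdd k i))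

def hyperbolicForm : QuadraticForm (ZMod 2) (Fin (k + k) → ZMod 2) :=
  (hyperbolicPairing k).toQuadraticMap

theorem hyperbolicPairing_apply (x y : Fin (k + k) → ZMod 2) :
    hyperbolicPairing k x y = ∑ i : Fin k, x (Fin.castAdd k i) * y (Fin.natAdd k i) := by
  simp [hyperbolicPairing]

theorem hyperbolicForm_apply (x : Fin (k + k) → ZMod 2) :
    hyperbolicForm k x = ∑ i : Fin k, x (Fin.castAdd k i) * x (Fin.natAdd k i) :=
  hyperbolicPairing_apply k x x

theorem hyperbolicForm_polarBilin_nondegenerate :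
    (hyperbolicForm k).polarBilin.Nondegenerate := by
  refine ((hyperbolicForm k).polarBilin_isRefl.nondegenerate_iff_separatingLeft).2
    fun x hx => funext fun j => ?_
  simp only [hyperbolicForm, QuadraticMap.polarBilin_apply_apply,
    LinearMap.BilinMap.polar_toQuadraticMap, hyperbolicPairing_apply] at hx
  induction j using Fin.addCases with
  | left i =>
    simpa [Pi.single_apply, Fin.castAdd_ne_addNat] using hx (Pi.single (Fin.natAdd k i) 1)
  | right i =>
    simpa [Pi.single_apply, (Fin.castAdd_ne_addNat _ _).symm]
      using hx (Pi.single (Fin.castAdd k i) 1)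

theorem even_ncard_hyperbolicForm_eq_one_inter (W : Submodule (ZMod 2) (Fin (k + k) → ZMod 2))
    (hW : 3 ≤ finrank (ZMod 2) W) :
    Even ({v | hyperbolicForm k v = 1} ∩ ((W : Set (Fin (k + k) → ZMod 2)) \ {0})).ncard := by
  classical
  have hsum : ∑ x : W, hyperbolicForm k x = 0 := by
    simp only [hyperbolicForm_apply]
    rw [Finset.sum_comm]
    exact Finset.sum_eq_zero fun i _ => sum_mul_eq_zero_of_three_le_finrank
      ((LinearMap.proj _).comp W.subtype) ((LinearMap.proj _).comp W.subtype) hW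
  have hset : {v | hyperbolicForm k v = 1} ∩ ((W : Set (Fin (k + k) → ZMod 2)) \ {0}) =
      Subtype.val '' {x : W | hyperbolicForm k x = 1} := by
    ext v
    constructor
    · rintro ⟨hv, hvW, -⟩
      exact ⟨⟨v, hvW⟩, hv, rfl⟩
    · rintro ⟨x, hx, rfl⟩
      exact ⟨hx, x.2, fun h0 => by simp [Set.mem_singleton_iff.1 h0] at hx⟩
  rw [hset, Set.ncard_image_of_injective _ Subtype.val_injective]
  exact even_ncard_setOf_eq_one_of_sum_eq_zero _ hsum

theorem finrank_le_of_disjoint_hyperbolicForm_eq_one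
    {W : Submodule (ZMod 2) (Fin (k + k) → ZMod 2)}
    (hW : Disjoint ((W : Set (Fin (k + k) → ZMod 2)) \ {0}) {v | hyperbolicForm k v = 1}) :
    finrank (ZMod 2) W ≤ k := by
  have hZMod2 : ∀ a : ZMod 2, a ≠ 1 → a = 0 := by decide
  have hQ : ∀ x ∈ W, hyperbolicForm k x = 0 := fun x hx => by
    by_cases hx0 : x = 0
    · rw [hx0, QuadraticMap.map_zero]
    · exact hZMod2 _ fun h => Set.disjoint_left.1 hW ⟨hx, hx0⟩ h
  have := QuadraticMap.two_mul_finrank_le_of_forall_mem_eq_zero _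
    (hyperbolicForm_polarBilin_nondegenerate k) hQ
  rw [finrank_fin_fun] at this
  omega

def quadricComplement : BinMatroid where
  dim := k + k
  E := {v | hyperbolicForm k v = 1}
  zero_not_mem := by simp

theorem quadricComplement_memE : (quadricComplement k).MemE 3 :=
  even_ncard_hyperbolicForm_eq_one_inter k

theorem le_critNum_quadricComplement : k ≤ (quadricComplement k).critNum := by
  refine le_csInf ⟨k + k, ⊥, by rw [finrank_bot]; simp [quadricComplement], by simp⟩ ?_
  rintro j ⟨W, hWj, hW⟩
  have : finrank (ZMod 2) W ≤ k := finrank_le_of_disjoint_hyperbolicForm_eq_one k hW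
  change _ = k + k - j at hWj
  omega

end Hyperbolic

theorem BinMatroid.MemE.not_hasIR_of_odd {M N : BinMatroid} {k : ℕ} (hM : M.MemE k)
    (hN : k ≤ N.dim) (hodd : Odd N.E.ncard) : ¬ M.HasIR N := by
  rintro ⟨φ, hφ, himage⟩
  have hrange : finrank (ZMod 2) (LinearMap.range φ) = N.dim := by
    rw [LinearMap.finrank_range_of_inj hφ, finrank_fin_fun]
  have heven := hM (LinearMap.range φ) (hN.trans_eq hrange.symm)
  rw [LinearMap.coe_range, ← himage, Set.ncard_image_of_injective _ hφ] at heven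
  exact Nat.not_even_iff_odd.2 hodd heven

theorem I3_ncard : I3.E.ncard = 3 := by
  change (Set.range fun i : Fin 3 => (Pi.single i 1 : Fin 3 → ZMod 2)).ncard = 3
  rw [Set.ncard_range_of_injective (by decide), Nat.card_eq_fintype_card, Fintype.card_fin]

theorem F7_ncard : F7.E.ncard = 7 := by
  change ({0}ᶜ : Set (Fin 3 → ZMod 2)).ncard = 7
  rw [Set.ncard_compl, Set.ncard_singleton, Nat.card_eq_fintype_card]
  rfl

/-- For every integer `k`, there is a matroid `M ∈ ℰ₃` containing
neither `I₃` nor `F₇` as an induced restriction such that `χ(M) ≥ k`. -/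
theorem stmt2 (k : ℕ) :
    ∃ M : BinMatroid, M.MemE 3 ∧ ¬ M.HasIR I3 ∧ ¬ M.HasIR F7 ∧ k ≤ M.critNum := by
  have hE := quadricComplement_memE k
  exact ⟨quadricComplement k, hE, hE.not_hasIR_of_odd le_rfl (by rw [I3_ncard]; decide),
    hE.not_hasIR_of_odd le_rfl (by rw [F7_ncard]; decide), le_critNum_quadricComplement k⟩
end

section
/- Let 𝓜 be a class of simple binary matroids that is closed under isomorphism and under induced restrictions, with every member of 𝓜 in ℰ₃, and suppose there exists a matroid in ℰ₃ that is not in 𝓜. Then there exists an integer k such that χ(M) ≤ k for every M ∈ 𝓜. -/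
/-! For `M ∈ ℰ₃` the indicator function of `E` is a quadratic form `Q` over `𝔽₂`: evenness on
the `3`-dimensional flats says exactly that its third differences vanish. If `χ(M)` is large,
`Q` vanishes on no subspace of small codimension, and a greedy choice inside orthogonal
complements produces `m` mutually orthogonal hyperbolic pairs, i.e. a linear map
`H : 𝔽₂ᵐ × 𝔽₂ᵐ → 𝔽₂ⁿ` with `Q (H (y, z)) = y ⬝ᵥ z`. Every quadratic form on `𝔽₂ᵐ` is
`y ↦ y ⬝ᵥ C y` for a matrix `C`, so `y ↦ H (y, C y)` embeds every `m`-dimensional member of `ℰ₃`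
in `M` as an induced restriction. Hence a member of `ℰ₃` outside `𝓜` bounds `χ` on `𝓜`. -/

open Module Matrix QuadraticMap

theorem ZMod.eq_zero_or_eq_one : ∀ a : ZMod 2, a = 0 ∨ a = 1 := by decide

theorem ZMod.sum_univ_two {M : Type*} [AddCommMonoid M] (F : ZMod 2 → M) :
    ∑ a, F a = F 0 + F 1 :=
  Fin.sum_univ_two F

section QuadraticOfCubicSums

variable {V : Type*} [AddCommGroup V] [Module (ZMod 2) V]

/-- The terms for `u` and `u + k`, with `0 ≠ k ∈ ker ψ`, cancel in pairs. -/
theorem sum_comp_eq_zero_of_not_injective {U : Type*} [AddCommGroup U] [Module (ZMod 2) U]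
    [Fintype U] (ψ : U →ₗ[ZMod 2] V) (hψ : ¬ Function.Injective ψ) (g : V → ZMod 2) :
    ∑ u, g (ψ u) = 0 := by
  obtain ⟨k, hk, hk0⟩ : ∃ k, ψ k = 0 ∧ k ≠ 0 := by
    simpa [injective_iff_map_eq_zero] using hψ
  refine Finset.sum_involution (fun u _ => u + k) (fun u _ => ?_) (fun u _ _ => by simpa using hk0)
    (fun _ _ => Finset.mem_univ _) (fun u _ => by rw [add_assoc, ZModModule.add_self, add_zero])
  rw [map_add, hk, add_zero]
  exact ZModModule.add_self _

def triple (x y z : V) : ZMod 2 × ZMod 2 × ZMod 2 →ₗ[ZMod 2] V :=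
  (LinearMap.toSpanSingleton _ _ x).coprod
    ((LinearMap.toSpanSingleton _ _ y).coprod (LinearMap.toSpanSingleton _ _ z))

theorem sum_triple (g : V → ZMod 2) (x y z : V) :
    ∑ u, g (triple x y z u) = g 0 + g x + g y + g z + g (x + y) + g (x + z) + g (y + z)
      + g (x + y + z) := by
  simp only [Fintype.sum_prod_type, ZMod.sum_univ_two, triple, LinearMap.coprod_apply,
    LinearMap.toSpanSingleton_apply, zero_smul, one_smul, add_zero, zero_add]
  simp only [← add_assoc]
  ring

theorem exists_quadraticForm_of_sum_eq_zero (g : V → ZMod 2) (hg0 : g 0 = 0)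
    (hg : ∀ ψ : ZMod 2 × ZMod 2 × ZMod 2 →ₗ[ZMod 2] V, Function.Injective ψ → ∑ u, g (ψ u) = 0) :
    ∃ Q : QuadraticForm (ZMod 2) V, ⇑Q = g := by
  have hsum (x y z : V) : ∑ u, g (triple x y z u) = 0 := by
    by_cases hψ : Function.Injective (triple x y z)
    · exact hg _ hψ
    · exact sum_comp_eq_zero_of_not_injective _ hψ g
  refine ⟨ofPolar g (fun a x => ?_) (fun x x' y => ?_) (fun a x y => ?_), rfl⟩
  · rcases ZMod.eq_zero_or_eq_one a with rfl | rfl <;> simp [hg0]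
  · have := hsum x x' y
    rw [sum_triple, hg0] at this
    simp only [polar]
    linear_combination (norm := (ring_nf; reduce_mod_char)) this
  · rcases ZMod.eq_zero_or_eq_one a with rfl | rfl <;> simp [polar, hg0]

end QuadraticOfCubicSums

section Codimension

variable {K V : Type*} [Field K] [AddCommGroup V] [Module K V] [FiniteDimensional K V]

theorem finrank_le_finrank_add_finrank_orthogonal (B : LinearMap.BilinForm K V)
    (S : Submodule K V) : finrank K V ≤ finrank K S + finrank K (B.orthogonal S) := by
  have := LinearMap.BilinForm.finrank_add_finrank_orthogonal' (B := B) S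
  omega

theorem finrank_le_finrank_inf_orthogonal_add (B : LinearMap.BilinForm K V)
    (W S : Submodule K V) : finrank K W ≤ finrank K ↥(W ⊓ B.orthogonal S) + finrank K S := by
  have := Submodule.finrank_sup_add_finrank_inf_eq W (B.orthogonal S)
  have := Submodule.finrank_le (W ⊔ B.orthogonal S)
  have := finrank_le_finrank_add_finrank_orthogonal B S
  omega

end Codimension


section Greedy

variable {V : Type*} [AddCommGroup V] [Module (ZMod 2) V] (Q : QuadraticForm (ZMod 2) V)

theorem exists_polar_ne_zero [FiniteDimensional (ZMod 2) V] {c : ℕ}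
    (hQ : ∀ W : Submodule (ZMod 2) V, finrank (ZMod 2) V < finrank (ZMod 2) W + c →
      ∃ x ∈ W, Q x ≠ 0)
    (W : Submodule (ZMod 2) V) (hW : finrank (ZMod 2) V + 1 < finrank (ZMod 2) W + c) :
    ∃ a ∈ W, ∃ b ∈ W, polar Q a b ≠ 0 := by
  by_contra! h
  -- `Q` is additive on `W`, hence vanishes on a hyperplane of `W`
  let ℓ : W →ₗ[ZMod 2] ZMod 2 :=
    { toFun := fun x => Q x
      map_add' := fun x y => by simp [QuadraticMap.map_add Q, h x x.2 y y.2]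
      map_smul' := fun a x => by
        rcases ZMod.eq_zero_or_eq_one a with rfl | rfl <;> simp }
  have hℓ : finrank (ZMod 2) W ≤ finrank (ZMod 2) (LinearMap.ker ℓ) + 1 := by
    have := ℓ.finrank_range_add_finrank_ker
    have := (LinearMap.range ℓ).finrank_le
    rw [finrank_self] at this
    omega
  obtain ⟨_, ⟨x, hx, rfl⟩, hQx⟩ := hQ ((LinearMap.ker ℓ).map W.subtype)
    (by rw [Submodule.finrank_map_subtype_eq]; omega)
  exact hQx hx

theorem isotropic_pair_of_polar_eq_one {u v : V} (hu : Q u = 0) (huv : polar Q u v = 1) :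
    Q (v + Q v • u) = 0 ∧ polar Q u (v + Q v • u) = 1 := by
  refine ⟨?_, by simp [polar_add_right, huv, hu]⟩
  rw [QuadraticMap.map_add (⇑Q), QuadraticMap.map_smul, hu, polar_smul_right, polar_comm, huv]
  simp [ZModModule.add_self]

theorem exists_isotropic_pair [FiniteDimensional (ZMod 2) V] {c : ℕ}
    (hQ : ∀ W : Submodule (ZMod 2) V, finrank (ZMod 2) V < finrank (ZMod 2) W + c →
      ∃ x ∈ W, Q x ≠ 0)
    (W : Submodule (ZMod 2) V) (hW : finrank (ZMod 2) V + 3 < finrank (ZMod 2) W + c) :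
    ∃ u ∈ W, ∃ v ∈ W, Q u = 0 ∧ Q v = 0 ∧ polar Q u v = 1 := by
  obtain ⟨a, ha, b, hb, hab⟩ := exists_polar_ne_zero Q hQ W (by omega)
  replace hab : polar Q a b = 1 := (ZMod.eq_zero_or_eq_one _).resolve_left hab
  obtain ⟨u, hu, hQu, hub⟩ : ∃ u ∈ W, Q u = 0 ∧ polar Q u b = 1 := by
    by_cases hQa : Q a = 0
    · exact ⟨a, ha, hQa, hab⟩
    -- if `Q a = 1`, add to `a` a vector orthogonal to `a` and `b` on which `Q` is `1`
    let S := Submodule.span (ZMod 2) (Set.range ![a, b])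
    obtain ⟨a', ha', hQa'⟩ := hQ (W ⊓ LinearMap.BilinForm.orthogonal (polarBilin Q) S) (by
      have := finrank_le_finrank_inf_orthogonal_add (polarBilin Q) W S
      have : finrank (ZMod 2) S ≤ 2 := by
        simpa [Set.finrank] using finrank_range_le_card (R := ZMod 2) ![a, b]
      omega)
    obtain ⟨ha'W, ha'ab⟩ := Submodule.mem_inf.mp ha'
    have h1 : polar Q a a' = 0 :=
      LinearMap.BilinForm.mem_orthogonal_iff.mp ha'ab a (Submodule.subset_span ⟨0, rfl⟩)
    have h2 : polar Q b a' = 0 :=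
      LinearMap.BilinForm.mem_orthogonal_iff.mp ha'ab b (Submodule.subset_span ⟨1, rfl⟩)
    refine ⟨a + a', W.add_mem ha ha'W, ?_, ?_⟩
    · rw [QuadraticMap.map_add (⇑Q), h1, (ZMod.eq_zero_or_eq_one _).resolve_left hQa,
        (ZMod.eq_zero_or_eq_one _).resolve_left hQa']
      decide
    · rw [polar_add_left, hab, polar_comm, h2, add_zero]
  exact ⟨u, hu, b + Q b • u, W.add_mem hb (W.smul_mem _ hu), hQu,
    isotropic_pair_of_polar_eq_one Q hQu hub⟩

end Greedy

section HyperbolicSnoc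

variable {K V : Type*} [CommRing K] [AddCommGroup V] [Module K V] {m : ℕ}

def hyperbolicSnoc (H : (Fin m → K) × (Fin m → K) →ₗ[K] V) (u v : V) :
    (Fin (m + 1) → K) × (Fin (m + 1) → K) →ₗ[K] V :=
  H ∘ₗ (LinearMap.funLeft K K Fin.castSucc).prodMap (LinearMap.funLeft K K Fin.castSucc)
    + (LinearMap.proj (Fin.last m) ∘ₗ LinearMap.fst K _ _).smulRight u
    + (LinearMap.proj (Fin.last m) ∘ₗ LinearMap.snd K _ _).smulRight v

theorem hyperbolicSnoc_apply (H : (Fin m → K) × (Fin m → K) →ₗ[K] V) (u v : V) (p) :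
    hyperbolicSnoc H u v p =
      H (Fin.init p.1, Fin.init p.2) + p.1 (Fin.last m) • u + p.2 (Fin.last m) • v :=
  rfl

theorem map_hyperbolicSnoc (Q : QuadraticForm K V) {H : (Fin m → K) × (Fin m → K) →ₗ[K] V}
    (hH : ∀ p, Q (H p) = p.1 ⬝ᵥ p.2) {u v : V} (hu : Q u = 0) (hv : Q v = 0)
    (huv : polar Q u v = 1) (horth : ∀ p, polar Q (H p) u = 0 ∧ polar Q (H p) v = 0) (p) :
    Q (hyperbolicSnoc H u v p) = p.1 ⬝ᵥ p.2 := by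
  rw [hyperbolicSnoc_apply, add_assoc, QuadraticMap.map_add (⇑Q),
    QuadraticMap.map_add (⇑Q) (_ • u), polar_add_right, polar_smul_right, polar_smul_right,
    polar_smul_left, polar_smul_right, QuadraticMap.map_smul, QuadraticMap.map_smul, hH, hu, hv,
    huv, (horth _).1, (horth _).2]
  simp [dotProduct, Fin.sum_univ_castSucc, Fin.init, mul_comm]

end HyperbolicSnoc

theorem exists_map_eq_dotProduct {V : Type*} [AddCommGroup V] [Module (ZMod 2) V]
    [FiniteDimensional (ZMod 2) V] (Q : QuadraticForm (ZMod 2) V) {c : ℕ}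
    (hQ : ∀ W : Submodule (ZMod 2) V, finrank (ZMod 2) V < finrank (ZMod 2) W + c →
      ∃ x ∈ W, Q x ≠ 0)
    (m : ℕ) (hm : 2 * m + 3 < c) :
    ∃ H : (Fin m → ZMod 2) × (Fin m → ZMod 2) →ₗ[ZMod 2] V, ∀ p, Q (H p) = p.1 ⬝ᵥ p.2 := by
  induction m with
  | zero => exact ⟨0, fun p => by simp [dotProduct]⟩
  | succ m ih =>
    obtain ⟨H, hH⟩ := ih (by omega)
    obtain ⟨u, hu, v, hv, hQu, hQv, huv⟩ := exists_isotropic_pair Q hQ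
      (LinearMap.BilinForm.orthogonal (polarBilin Q) (LinearMap.range H)) (by
        have := finrank_le_finrank_add_finrank_orthogonal (polarBilin Q) (LinearMap.range H)
        have := H.finrank_range_le
        simp only [finrank_prod, finrank_fin_fun] at this
        omega)
    have horth (p) : polar Q (H p) u = 0 ∧ polar Q (H p) v = 0 :=
      ⟨LinearMap.BilinForm.mem_orthogonal_iff.mp hu _ ⟨p, rfl⟩,
        LinearMap.BilinForm.mem_orthogonal_iff.mp hv _ ⟨p, rfl⟩⟩
    exact ⟨hyperbolicSnoc H u v, map_hyperbolicSnoc Q hH hQu hQv huv horth⟩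

section HyperbolicEmbedding

variable {K V ι : Type*} [CommRing K] [AddCommGroup V] [Module K V] [Fintype ι]

theorem QuadraticMap.exists_eq_dotProduct_mulVec [LinearOrder ι] (Q : QuadraticForm K (ι → K)) :
    ∃ C : Matrix ι ι K, ∀ y, Q y = y ⬝ᵥ C *ᵥ y := by
  refine ⟨LinearMap.toMatrix₂' K (Q.toBilin (Pi.basisFun K ι)), fun y => ?_⟩
  rw [← Matrix.toLinearMap₂'_apply', Matrix.toLinearMap₂'_toMatrix',
    ← LinearMap.BilinMap.toQuadraticMap_apply, toQuadraticMap_toBilin]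

theorem polar_eq_of_map_eq_dotProduct (Q : QuadraticForm K V)
    {H : (ι → K) × (ι → K) →ₗ[K] V} (hH : ∀ p, Q (H p) = p.1 ⬝ᵥ p.2) (p q) :
    polar Q (H p) (H q) = p.1 ⬝ᵥ q.2 + q.1 ⬝ᵥ p.2 := by
  simp only [polar, ← map_add, hH, Prod.fst_add, Prod.snd_add, dotProduct_add, add_dotProduct]
  ring

theorem exists_injective_comp_eq_of_map_eq_dotProduct [LinearOrder ι] (Q : QuadraticForm K V)
    {H : (ι → K) × (ι → K) →ₗ[K] V} (hH : ∀ p, Q (H p) = p.1 ⬝ᵥ p.2)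
    (Q' : QuadraticForm K (ι → K)) :
    ∃ φ : (ι → K) →ₗ[K] V, Function.Injective φ ∧ ∀ y, Q (φ y) = Q' y := by
  obtain ⟨C, hC⟩ := Q'.exists_eq_dotProduct_mulVec
  refine ⟨H ∘ₗ LinearMap.id.prod C.mulVecLin, (injective_iff_map_eq_zero _).mpr fun y hy => ?_,
    fun y => by simp [hH, hC]⟩
  ext i
  have := polar_eq_of_map_eq_dotProduct Q hH (y, C *ᵥ y) (0, Pi.single i 1)
  simp_all

end HyperbolicEmbedding

namespace BinMatroid

theorem sum_indicator_comp_eq_zero {M : BinMatroid} (hM : M.MemE 3)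
    (ψ : ZMod 2 × ZMod 2 × ZMod 2 →ₗ[ZMod 2] (Fin M.dim → ZMod 2)) (hψ : Function.Injective ψ) :
    ∑ u, M.E.indicator (1 : (Fin M.dim → ZMod 2) → ZMod 2) (ψ u) = 0 := by
  classical
  have hrestr : M.E ∩ (Set.range ψ \ {0}) = ψ '' {u | ψ u ∈ M.E} := by
    ext x
    constructor
    · rintro ⟨hx, ⟨u, rfl⟩, -⟩
      exact ⟨u, hx, rfl⟩
    · rintro ⟨u, hu, rfl⟩
      exact ⟨hu, ⟨u, rfl⟩, fun h => M.zero_not_mem (h ▸ hu)⟩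
  have heven := hM (LinearMap.range ψ) (by simp [LinearMap.finrank_range_of_inj hψ])
  rw [LinearMap.coe_range, hrestr, Set.ncard_image_of_injective _ hψ,
    Set.ncard_eq_toFinset_card'] at heven
  simpa [Set.indicator_apply, Finset.sum_boole, ZMod.natCast_eq_zero_iff_even] using heven

theorem exists_quadraticForm_eq_indicator {M : BinMatroid} (hM : M.MemE 3) :
    ∃ Q : QuadraticForm (ZMod 2) (Fin M.dim → ZMod 2), ⇑Q = M.E.indicator 1 :=
  exists_quadraticForm_of_sum_eq_zero _ (Set.indicator_of_notMem M.zero_not_mem _)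
    (sum_indicator_comp_eq_zero hM)

theorem exists_mem_of_lt_critNum (M : BinMatroid) (W : Submodule (ZMod 2) (Fin M.dim → ZMod 2))
    (hW : M.dim < finrank (ZMod 2) W + M.critNum) : ∃ x ∈ W, x ∈ M.E := by
  by_contra! h
  have hle := W.finrank_le
  rw [finrank_fin_fun] at hle
  have : M.critNum ≤ M.dim - finrank (ZMod 2) W :=
    Nat.sInf_le ⟨W, by omega, Set.disjoint_left.mpr fun x hx => h x hx.1⟩
  omega

theorem hasIR_of_injective {M N : BinMatroid}
    (φ : (Fin N.dim → ZMod 2) →ₗ[ZMod 2] (Fin M.dim → ZMod 2)) (hφ : Function.Injective φ)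
    (hE : ∀ y, φ y ∈ M.E ↔ y ∈ N.E) : M.HasIR N := by
  refine ⟨φ, hφ, Set.ext fun x => ⟨?_, ?_⟩⟩
  · rintro ⟨y, hy, rfl⟩
    refine ⟨(hE y).mpr hy, ⟨y, rfl⟩, fun h0 => N.zero_not_mem ?_⟩
    rwa [← (injective_iff_map_eq_zero φ).mp hφ y h0]
  · rintro ⟨hx, ⟨y, rfl⟩, -⟩
    exact ⟨y, (hE y).mp hx, rfl⟩

theorem hasIR_of_lt_critNum {M N : BinMatroid} (hM : M.MemE 3) (hN : N.MemE 3)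
    (h : 2 * N.dim + 3 < M.critNum) : M.HasIR N := by
  obtain ⟨Q, hQ⟩ := exists_quadraticForm_eq_indicator hM
  obtain ⟨Q', hQ'⟩ := exists_quadraticForm_eq_indicator hN
  have hdense (W : Submodule (ZMod 2) (Fin M.dim → ZMod 2))
      (hW : finrank (ZMod 2) (Fin M.dim → ZMod 2) < finrank (ZMod 2) W + M.critNum) :
      ∃ x ∈ W, Q x ≠ 0 := by
    obtain ⟨x, hxW, hxE⟩ := M.exists_mem_of_lt_critNum W (by simpa using hW)
    exact ⟨x, hxW, by simp [hQ, hxE]⟩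
  obtain ⟨H, hH⟩ := exists_map_eq_dotProduct Q hdense N.dim h
  obtain ⟨φ, hφ, hQφ⟩ := exists_injective_comp_eq_of_map_eq_dotProduct Q hH Q'
  refine hasIR_of_injective φ hφ fun y => ?_
  rw [← Set.indicator_eq_one_iff_mem (ZMod 2), ← Set.indicator_eq_one_iff_mem (ZMod 2), ← hQ,
    ← hQ', hQφ]

end BinMatroid

theorem stmt4_general (𝓜 : Set BinMatroid)
    (hres : ∀ M N : BinMatroid, M ∈ 𝓜 → M.HasIR N → N ∈ 𝓜)
    (hsub : ∀ M ∈ 𝓜, M.MemE 3)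
    (hproper : ∃ N : BinMatroid, N.MemE 3 ∧ N ∉ 𝓜) :
    ∃ k : ℕ, ∀ M ∈ 𝓜, M.critNum ≤ k := by
  obtain ⟨N, hN, hN𝓜⟩ := hproper
  refine ⟨2 * N.dim + 3, fun M hM => ?_⟩
  by_contra! h
  exact hN𝓜 (hres M N hM (BinMatroid.hasIR_of_lt_critNum (hsub M hM) hN h))

/-- If `𝓜` is a class of simple binary matroids closed under isomorphism
and under induced restrictions, every member of `𝓜` lies in `ℰ₃`, and some matroid of
`ℰ₃` is not in `𝓜`, then there is `k` with `χ(M) ≤ k` for all `M ∈ 𝓜`. -/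
theorem stmt4 (𝓜 : Set BinMatroid)
    (hiso : ∀ M N : BinMatroid, M ∈ 𝓜 → N.Iso M → N ∈ 𝓜)
    (hres : ∀ M N : BinMatroid, M ∈ 𝓜 → M.HasIR N → N ∈ 𝓜)
    (hsub : ∀ M ∈ 𝓜, M.MemE 3)
    (hproper : ∃ N : BinMatroid, N.MemE 3 ∧ N ∉ 𝓜) :
    ∃ k : ℕ, ∀ M ∈ 𝓜, M.critNum ≤ k :=
  stmt4_general 𝓜 hres hsub hproper
end

section
/- Let M be the doubling of a matroid M₀. Then (i) χ(M) = χ(M₀), and (ii) for every matroid N that is not the doubling of any matroid, if M₀ contains no induced N-restriction, then neither does M. -/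
open Module in
lemma zmod2_cases : ∀ c : ZMod 2, c = 0 ∨ c = 1 := by decide

lemma addSelf {m : ℕ} (v : Fin m → ZMod 2) : v + v = 0 := by
  funext i
  have : ∀ a : ZMod 2, a + a = 0 := by decide
  exact this (v i)

open Module in
lemma exists_sub {n : ℕ} (p : Submodule (ZMod 2) (Fin n → ZMod 2)) (d : ℕ)
    (hd : d ≤ finrank (ZMod 2) p) :
    ∃ U : Submodule (ZMod 2) (Fin n → ZMod 2), U ≤ p ∧ finrank (ZMod 2) U = d := by
  let b := Module.finBasis (ZMod 2) p
  let fam : Fin d → (Fin n → ZMod 2) := fun i => (b (Fin.castLE hd i) : Fin n → ZMod 2)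
  have li : LinearIndependent (ZMod 2) fam := by
    have h1 : LinearIndependent (ZMod 2) (fun i : Fin d => b (Fin.castLE hd i)) :=
      b.linearIndependent.comp _ (Fin.castLE_injective hd)
    exact h1.map' p.subtype (Submodule.ker_subtype p)
  refine ⟨Submodule.span (ZMod 2) (Set.range fam), ?_, ?_⟩
  · rw [Submodule.span_le]
    rintro x ⟨i, rfl⟩
    exact (b (Fin.castLE hd i)).2
  · rw [finrank_span_eq_card li, Fintype.card_fin]

open Module LinearMap in
set_option maxHeartbeats 2000000 in
theorem stmt6 (M M₀ : BinMatroid) (h : M.IsDoublingOf M₀) :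
    M.critNum = M₀.critNum ∧
    ∀ N : BinMatroid, (¬ ∃ N₀ : BinMatroid, N.IsDoublingOf N₀) →
      ¬ M₀.HasIR N → ¬ M.HasIR N := by
  obtain ⟨hdim, φ, hφ, w, hw0, hwr, hwE, hE⟩ := h
  -- the coordinate equivalence Φ : 𝔽₂ⁿ × 𝔽₂ ≃ 𝔽₂^{n+1}, (u, c) ↦ φ u + c • w
  have hdimeq : finrank (ZMod 2) ((Fin M₀.dim → ZMod 2) × ZMod 2)
      = finrank (ZMod 2) (Fin M.dim → ZMod 2) := by
    rw [Module.finrank_prod, Module.finrank_fin_fun, Module.finrank_fin_fun,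
      Module.finrank_self, hdim]
  set f : ((Fin M₀.dim → ZMod 2) × ZMod 2) →ₗ[ZMod 2] (Fin M.dim → ZMod 2) :=
    φ.coprod (LinearMap.toSpanSingleton (ZMod 2) _ w) with hfdef
  have hf : ∀ (u : Fin M₀.dim → ZMod 2) (c : ZMod 2), f (u, c) = φ u + c • w :=
    fun u c => rfl
  have hfinj : Function.Injective f := by
    rw [← LinearMap.ker_eq_bot, Submodule.eq_bot_iff]
    rintro ⟨u, c⟩ hx
    rw [LinearMap.mem_ker, hf] at hx
    rcases zmod2_cases c with rfl | rfl
    · rw [zero_smul, add_zero] at hx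
      have : u = 0 := hφ (by rw [hx, map_zero])
      simp [this]
    · exfalso
      apply hwr
      refine ⟨-u, ?_⟩
      rw [map_neg, neg_eq_of_add_eq_zero_right ?_]
      rwa [one_smul] at hx
  have hfbij : Function.Bijective f :=
    ⟨hfinj, (LinearMap.injective_iff_surjective_of_finrank_eq_finrank hdimeq).mp hfinj⟩
  set Φ := LinearEquiv.ofBijective f hfbij with hΦdef
  set ρ : (Fin M.dim → ZMod 2) →ₗ[ZMod 2] (Fin M₀.dim → ZMod 2) :=
    (LinearMap.fst (ZMod 2) (Fin M₀.dim → ZMod 2) (ZMod 2)).comp Φ.symm.toLinearMap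
    with hρdef
  have hΦ : ∀ p : (Fin M₀.dim → ZMod 2) × ZMod 2, Φ p = φ p.1 + p.2 • w := fun p => rfl
  have hρ : ∀ (u : Fin M₀.dim → ZMod 2) (c : ZMod 2), ρ (φ u + c • w) = u := by
    intro u c
    show ((Φ.symm (φ u + c • w)) : (Fin M₀.dim → ZMod 2) × ZMod 2).1 = u
    rw [show φ u + c • w = Φ (u, c) from rfl, Φ.symm_apply_apply]
  have hρφ : ∀ u, ρ (φ u) = u := fun u => by
    have := hρ u 0; rwa [zero_smul, add_zero] at this
  have hρw : ρ w = 0 := by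
    have := hρ 0 1; rwa [map_zero, one_smul, zero_add] at this
  have hdecomp : ∀ x : Fin M.dim → ZMod 2, x = φ (ρ x) + (Φ.symm x).2 • w := by
    intro x
    conv_lhs => rw [← Φ.apply_symm_apply x]
    exact hΦ (Φ.symm x)
  have hkey : ∀ x : Fin M.dim → ZMod 2, x ∈ M.E ↔ ρ x ∈ M₀.E := by
    intro x
    rw [hE]
    constructor
    · rintro (⟨e, he, rfl⟩ | ⟨y, ⟨e, he, rfl⟩, rfl⟩)
      · rwa [hρφ]
      · show ρ (w + φ e) ∈ M₀.E
        have hx : w + φ e = φ e + (1 : ZMod 2) • w := by rw [one_smul, add_comm]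
        rw [hx, hρ]; exact he
    · intro hx
      rcases zmod2_cases (Φ.symm x).2 with h2 | h2
      · left
        refine ⟨ρ x, hx, ?_⟩
        conv_rhs => rw [hdecomp x]
        rw [h2, zero_smul, add_zero]
      · right
        refine ⟨φ (ρ x), ⟨ρ x, hx, rfl⟩, ?_⟩
        show w + φ (ρ x) = x
        conv_rhs => rw [hdecomp x]
        rw [h2, one_smul, add_comm]
  have hkerρ : ∀ x : Fin M.dim → ZMod 2, ρ x = 0 → x = 0 ∨ x = w := by
    intro x hx
    have hd := hdecomp x
    rw [hx, map_zero, zero_add] at hd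
    rcases zmod2_cases (Φ.symm x).2 with h2 | h2
    · left; rw [hd, h2, zero_smul]
    · right; rw [hd, h2, one_smul]
  constructor
  · -- part (i)
    have hM0mem : M₀.dim ∈ {k : ℕ | ∃ W : Submodule (ZMod 2) (Fin M₀.dim → ZMod 2),
        finrank (ZMod 2) W = M₀.dim - k ∧
        Disjoint ((W : Set (Fin M₀.dim → ZMod 2)) \ {0}) M₀.E} := by
      refine ⟨⊥, ?_, ?_⟩
      · rw [finrank_bot, Nat.sub_self]
      · simp
    have hMmem : M.dim ∈ {k : ℕ | ∃ W : Submodule (ZMod 2) (Fin M.dim → ZMod 2),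
        finrank (ZMod 2) W = M.dim - k ∧
        Disjoint ((W : Set (Fin M.dim → ZMod 2)) \ {0}) M.E} := by
      refine ⟨⊥, ?_, ?_⟩
      · rw [finrank_bot, Nat.sub_self]
      · simp
    have hχ0n : M₀.critNum ≤ M₀.dim := Nat.sInf_le hM0mem
    have hle1 : M.critNum ≤ M₀.critNum := by
      have hmem0 : ∃ W : Submodule (ZMod 2) (Fin M₀.dim → ZMod 2),
          finrank (ZMod 2) W = M₀.dim - M₀.critNum ∧
          Disjoint ((W : Set (Fin M₀.dim → ZMod 2)) \ {0}) M₀.E :=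
        Nat.sInf_mem ⟨M₀.dim, hM0mem⟩
      obtain ⟨W₀, hW₀rk, hW₀dis⟩ := hmem0
      apply Nat.sInf_le
      refine ⟨Submodule.map φ W₀ ⊔ Submodule.span (ZMod 2) {w}, ?_, ?_⟩
      · have h1 : finrank (ZMod 2) W₀ = finrank (ZMod 2) (Submodule.map φ W₀) :=
          (Submodule.equivMapOfInjective φ hφ W₀).finrank_eq
        have h2 : finrank (ZMod 2) (Submodule.span (ZMod 2) {w}) = 1 :=
          finrank_span_singleton hw0
        have h3 : Submodule.map φ W₀ ⊓ Submodule.span (ZMod 2) {w} = ⊥ := by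
          rw [Submodule.eq_bot_iff]
          rintro x ⟨hx1, hx2⟩
          obtain ⟨c, rfl⟩ := Submodule.mem_span_singleton.mp hx2
          rcases zmod2_cases c with rfl | rfl
          · rw [zero_smul]
          · rw [one_smul] at hx1 ⊢
            obtain ⟨u, _, hu⟩ := hx1
            exact absurd ⟨u, hu⟩ hwr
        have h4 := Submodule.finrank_sup_add_finrank_inf_eq
          (Submodule.map φ W₀) (Submodule.span (ZMod 2) {w})
        rw [h3, finrank_bot, ← h1, h2, hW₀rk] at h4
        omega
      · rw [Set.disjoint_left]
        rintro x ⟨hxW, hx0⟩ hxE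
        simp only [Set.mem_singleton_iff] at hx0
        obtain ⟨a, ha, b, hb, rfl⟩ := Submodule.mem_sup.mp hxW
        obtain ⟨u, hu, rfl⟩ := ha
        obtain ⟨c, rfl⟩ := Submodule.mem_span_singleton.mp hb
        have hρx : ρ (φ u + c • w) = u := hρ u c
        have huE : u ∈ M₀.E := by rw [← hρx]; exact (hkey _).1 hxE
        have hu0 : u ≠ 0 := fun h => M₀.zero_not_mem (h ▸ huE)
        exact Set.disjoint_left.mp hW₀dis ⟨hu, hu0⟩ huE
    have hle2 : M₀.critNum ≤ M.critNum := by
      have hmemM : ∃ W : Submodule (ZMod 2) (Fin M.dim → ZMod 2),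
          finrank (ZMod 2) W = M.dim - M.critNum ∧
          Disjoint ((W : Set (Fin M.dim → ZMod 2)) \ {0}) M.E :=
        Nat.sInf_mem ⟨M.dim, hMmem⟩
      obtain ⟨W, hWrk, hWdis⟩ := hmemM
      by_cases hk : M₀.dim < M.critNum
      · exact hχ0n.trans hk.le
      · push_neg at hk
        have hHrk : finrank (ZMod 2) (LinearMap.range φ) = M₀.dim := by
          rw [LinearMap.finrank_range_of_inj hφ, Module.finrank_fin_fun]
        have hsuple : finrank (ZMod 2)
            (W ⊔ LinearMap.range φ : Submodule (ZMod 2) _) ≤ M.dim := by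
          have := Submodule.finrank_le
            (W ⊔ LinearMap.range φ : Submodule (ZMod 2) (Fin M.dim → ZMod 2))
          rwa [Module.finrank_fin_fun] at this
        have h4 := Submodule.finrank_sup_add_finrank_inf_eq W (LinearMap.range φ)
        have hUrk : finrank (ZMod 2) (Submodule.comap φ (W ⊓ LinearMap.range φ))
            = finrank (ZMod 2) (W ⊓ LinearMap.range φ : Submodule (ZMod 2) _) := by
          have hmc : Submodule.map φ (Submodule.comap φ (W ⊓ LinearMap.range φ))
              = W ⊓ LinearMap.range φ := by
            rw [Submodule.map_comap_eq, inf_eq_right.mpr]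
            exact inf_le_right
          conv_rhs => rw [← hmc]
          exact (Submodule.equivMapOfInjective φ hφ _).finrank_eq
        obtain ⟨U', hU'le, hU'rk⟩ := exists_sub
          (Submodule.comap φ (W ⊓ LinearMap.range φ)) (M₀.dim - M.critNum) (by omega)
        apply Nat.sInf_le
        refine ⟨U', hU'rk, ?_⟩
        rw [Set.disjoint_left]
        rintro x ⟨hxU, hx0⟩ hxE
        simp only [Set.mem_singleton_iff] at hx0
        have hφx : φ x ∈ W ⊓ LinearMap.range φ := hU'le hxU
        have hφxE : φ x ∈ M.E := (hkey _).2 (by rwa [hρφ])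
        have hφx0 : φ x ≠ 0 := fun h => hx0 (hφ (h.trans (map_zero φ).symm))
        exact Set.disjoint_left.mp hWdis ⟨hφx.1, hφx0⟩ hφxE
    exact le_antisymm hle1 hle2
  · -- part (ii)
    rintro N hNdbl hM₀N ⟨ψ, hψ, hψE⟩
    have hNE : ∀ u, u ∈ N.E ↔ ψ u ∈ M.E ∧ u ≠ 0 := by
      intro u
      constructor
      · intro hu
        have hm : ψ u ∈ M.E ∩ (Set.range ψ \ {0}) := hψE ▸ ⟨u, hu, rfl⟩
        exact ⟨hm.1, fun h0 => hm.2.2 (by rw [h0, map_zero]; rfl)⟩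
      · rintro ⟨h1, h2⟩
        have hne : ψ u ≠ 0 := fun h => h2 (hψ (h.trans (map_zero ψ).symm))
        have hm : ψ u ∈ M.E ∩ (Set.range ψ \ {0}) := ⟨h1, ⟨u, rfl⟩, hne⟩
        rw [← hψE] at hm
        obtain ⟨v, hv, hvu⟩ := hm
        rwa [← hψ hvu]
    by_cases hwF : w ∈ Set.range ψ
    · -- w in the flat: N is a doubling, contradiction
      obtain ⟨w', hw'⟩ := hwF
      exfalso
      apply hNdbl
      -- the linear functional detecting the w-coordinate
      set lam : (Fin N.dim → ZMod 2) →ₗ[ZMod 2] ZMod 2 :=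
        ((LinearMap.snd (ZMod 2) (Fin M₀.dim → ZMod 2) (ZMod 2)).comp
          Φ.symm.toLinearMap).comp ψ with hlamdef
      have hlam : ∀ u, lam u = (Φ.symm (ψ u)).2 := fun u => rfl
      have hwΦ : w = Φ (0, 1) := by
        rw [hΦ (0, 1)]
        simp
      have hlamw' : lam w' = 1 := by
        rw [hlam, hw', hwΦ, Φ.symm_apply_apply]
      have hlamρ : ∀ u, lam u = 0 → ψ u = φ (ρ (ψ u)) := by
        intro u hu
        conv_lhs => rw [hdecomp (ψ u)]
        rw [← hlam, hu, zero_smul, add_zero]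
      set K := LinearMap.ker lam with hKdef
      have hlamsurj : LinearMap.range lam = ⊤ := by
        rw [LinearMap.range_eq_top]
        intro c
        refine ⟨c • w', ?_⟩
        rw [map_smul, hlamw', smul_eq_mul, mul_one]
      have hKrk : finrank (ZMod 2) K + 1 = N.dim := by
        have := LinearMap.finrank_range_add_finrank_ker lam
        rw [hlamsurj, finrank_top, Module.finrank_self, Module.finrank_fin_fun,
          ← hKdef] at this
        omega
      have hfr : finrank (ZMod 2) (Fin (N.dim - 1) → ZMod 2) = finrank (ZMod 2) K := by
        rw [Module.finrank_fin_fun]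
        omega
      set e := LinearEquiv.ofFinrankEq (Fin (N.dim - 1) → ZMod 2) K hfr with hedef
      set χ' := K.subtype ∘ₗ e.toLinearMap with hχdef
      have hχinj : Function.Injective χ' := (Submodule.injective_subtype K).comp e.injective
      have hχrange : Set.range χ' = (K : Set (Fin N.dim → ZMod 2)) := by
        ext x
        constructor
        · rintro ⟨y, rfl⟩
          exact (e y).2
        · intro hx
          exact ⟨e.symm ⟨x, hx⟩, by simp [hχdef]⟩
      have h0NE : (0 : Fin N.dim → ZMod 2) ∉ N.E := fun h => ((hNE 0).1 h).2 rfl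
      have hw'0 : w' ≠ 0 := by
        rintro rfl
        rw [map_zero] at hw'
        exact hw0 hw'.symm
      have hw'NE : w' ∉ N.E := fun h => hwE (hw' ▸ ((hNE w').1 h).1)
      have hw'K : w' ∉ K := by
        intro h
        rw [hKdef, LinearMap.mem_ker, hlamw'] at h
        exact one_ne_zero h
      have h0pre : (0 : Fin (N.dim - 1) → ZMod 2) ∉ χ' ⁻¹' N.E := by
        intro h0
        apply h0NE
        rwa [Set.mem_preimage, map_zero] at h0
      refine ⟨⟨N.dim - 1, χ' ⁻¹' N.E, h0pre⟩, ?_, χ', hχinj, w', hw'0, ?_, hw'NE, ?_⟩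
      · show N.dim = (N.dim - 1) + 1
        omega
      · rw [hχrange]
        exact hw'K
      · show N.E = χ' '' (χ' ⁻¹' N.E) ∪ (fun x => w' + x) '' (χ' '' (χ' ⁻¹' N.E))
        have himg : χ' '' (χ' ⁻¹' N.E) = N.E ∩ (K : Set (Fin N.dim → ZMod 2)) := by
          rw [Set.image_preimage_eq_inter_range, hχrange]
        rw [himg]
        ext u
        constructor
        · intro hu
          obtain ⟨hψu, hu0⟩ := (hNE u).1 hu
          have hθu : ρ (ψ u) ∈ M₀.E := (hkey _).1 hψu
          rcases zmod2_cases (lam u) with h2 | h2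
          · exact Or.inl ⟨hu, LinearMap.mem_ker.mpr h2⟩
          · right
            have hdK : w' + u ∈ K := by
              rw [hKdef, LinearMap.mem_ker, map_add, hlamw', h2]
              decide
            have hdne : w' + u ≠ 0 := by
              intro hz
              have : u = w' := by
                have h' := congrArg (fun v => w' + v) hz
                simpa [← add_assoc, addSelf w'] using h'
              exact hw'NE (this ▸ hu)
            have hdNE : w' + u ∈ N.E := by
              apply (hNE _).2
              refine ⟨?_, hdne⟩
              apply (hkey _).2
              rw [map_add, hw', map_add, hρw, zero_add]
              exact hθu
            refine ⟨w' + u, ⟨hdNE, hdK⟩, ?_⟩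
            show w' + (w' + u) = u
            rw [← add_assoc, addSelf w', zero_add]
        · rintro (⟨h1, _⟩ | ⟨d, ⟨hd1, hd2⟩, rfl⟩)
          · exact h1
          · obtain ⟨hψd, hd0⟩ := (hNE d).1 hd1
            apply (hNE _).2
            constructor
            · apply (hkey _).2
              rw [map_add, hw', map_add, hρw, zero_add]
              exact (hkey _).1 hψd
            · intro hz
              have h1 : lam (w' + d) = 0 := by rw [show w' + d = 0 from hz, map_zero]
              rw [map_add, hlamw', LinearMap.mem_ker.mp hd2, add_zero] at h1
              exact one_ne_zero h1
    · -- w not in the flat: M₀ has an induced N-restriction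
      apply hM₀N
      have hinj0 : ∀ u, ρ (ψ u) = 0 → u = 0 := by
        intro u hu
        rcases hkerρ _ hu with h | h
        · exact hψ (h.trans (map_zero ψ).symm)
        · exact absurd ⟨u, h⟩ hwF
      refine ⟨ρ.comp ψ, ?_, ?_⟩
      · intro u v huv
        have : ρ (ψ (u - v)) = 0 := by
          rw [map_sub, map_sub, sub_eq_zero]; exact huv
        have := hinj0 _ this
        rwa [sub_eq_zero] at this
      · ext x
        constructor
        · rintro ⟨u, hu, rfl⟩
          obtain ⟨h1, h2⟩ := (hNE u).1 hu
          refine ⟨(hkey _).1 h1, ⟨u, rfl⟩, ?_⟩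
          simp only [Set.mem_singleton_iff]
          exact fun h0 => h2 (hinj0 u h0)
        · rintro ⟨hx1, ⟨u, rfl⟩, hx3⟩
          simp only [Set.mem_singleton_iff] at hx3
          have hu0 : u ≠ 0 := by
            rintro rfl
            exact hx3 (by simp)
          have : u ∈ N.E := (hNE u).2 ⟨(hkey _).2 hx1, hu0⟩
          exact ⟨u, this, rfl⟩
end

section
/- Let k ≥ 2 be an integer and let M = (E, G) and N = (D, G) be matroids of the same dimension with M ∈ ℰ_k. Then the twist doubling of M by N belongs to ℰ_k if and only if N ∈ ℰ_{k−1}. -/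
/-- The twist doubling of the ground set `E` by the ground set `D` (inside `𝔽₂ⁿ`):
identify `𝔽₂^{n+1}` with `𝔽₂ × 𝔽₂ⁿ` (via `Fin.cons`), embed `G` as `{0} × G`, let
`w = (1, 0)`, and take the ground set `E ∪ (w + (E Δ D))`. -/
def twistDouble {n : ℕ} (E D : Set (Fin n → ZMod 2)) (hE : 0 ∉ E) : BinMatroid where
  dim := n + 1
  E := ((fun x : Fin n → ZMod 2 => Fin.cons (0 : ZMod 2) x) '' E) ∪
    ((fun v => (Fin.cons (1 : ZMod 2) (0 : Fin n → ZMod 2) : Fin (n+1) → ZMod 2) + v) ''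
      ((fun x : Fin n → ZMod 2 => Fin.cons (0 : ZMod 2) x) '' (symmDiff E D)))
  zero_not_mem := by
    rintro (⟨x, hx, h⟩ | ⟨y, ⟨x, hx, rfl⟩, h⟩)
    · apply hE
      have hx0 : x = 0 := by
        funext i
        have := congrFun h i.succ
        simpa using this
      rwa [hx0] at hx
    · have := congrFun h 0
      simp at this

namespace Stmt7Aux
open Set Submodule Module
open scoped symmDiff
variable {n : ℕ}

def emb (n : ℕ) : (Fin n → ZMod 2) →ₗ[ZMod 2] (Fin (n+1) → ZMod 2) where
  toFun x := Fin.cons 0 x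
  map_add' x y := funext fun i => by cases i using Fin.cases <;> simp
  map_smul' c x := funext fun i => by cases i using Fin.cases <;> simp

@[simp] lemma emb_zero_coord (x : Fin n → ZMod 2) : emb n x 0 = 0 := rfl
@[simp] lemma emb_succ_coord (x : Fin n → ZMod 2) (i : Fin n) : emb n x i.succ = x i := rfl

lemma emb_inj : Function.Injective (emb n) := fun x y h => by
  funext i; exact congrFun h i.succ

def wvec (n : ℕ) : Fin (n+1) → ZMod 2 := Fin.cons 1 0

@[simp] lemma wvec_zero : wvec n 0 = 1 := rfl
@[simp] lemma wvec_succ (i : Fin n) : wvec n i.succ = 0 := rfl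

lemma addself {m : ℕ} (x : Fin m → ZMod 2) : x + x = 0 := by
  funext i; have : ∀ a : ZMod 2, a + a = 0 := by decide
  exact this _

lemma mem_range_emb (x : Fin (n+1) → ZMod 2) : x ∈ LinearMap.range (emb n) ↔ x 0 = 0 := by
  constructor
  · rintro ⟨y, rfl⟩; rfl
  · intro h
    exact ⟨Fin.tail x, funext fun i => by
      cases i using Fin.cases with
      | zero => simpa using h.symm
      | succ j => rfl⟩

lemma g_inj : Function.Injective (fun x => wvec n + emb n x) :=
  fun x y h => emb_inj (by simpa using congrArg (fun z => wvec n + z) (by simpa using h : wvec n + emb n x = wvec n + emb n y))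

lemma inter_diff_zero {α : Type*} [Zero α] (A B : Set α) (h : (0:α) ∉ A) :
    A ∩ (B \ {0}) = A ∩ B := by
  ext x; simp only [mem_inter_iff, mem_diff, mem_singleton_iff]
  exact ⟨fun ⟨h1, h2, _⟩ => ⟨h1, h2⟩, fun ⟨h1, h2⟩ => ⟨h1, h2, fun hx => h (hx ▸ h1)⟩⟩

/-- The master counting lemma. -/
lemma count_inter (A B : Set (Fin n → ZMod 2)) (W : Set (Fin (n+1) → ZMod 2)) :
    (((emb n) '' A ∪ (fun y => wvec n + y) '' ((emb n) '' B)) ∩ W).ncard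
      = (A ∩ (emb n) ⁻¹' W).ncard + (B ∩ (fun x => wvec n + emb n x) ⁻¹' W).ncard := by
  have h2 : (fun y => wvec n + y) '' ((emb n) '' B) = (fun x => wvec n + emb n x) '' B := by
    rw [Set.image_image]
  rw [Set.union_inter_distrib_right, h2, ← Set.image_inter_preimage, ← Set.image_inter_preimage,
    Set.ncard_union_eq ?_ (Set.toFinite _) (Set.toFinite _),
    Set.ncard_image_of_injective _ emb_inj, Set.ncard_image_of_injective _ g_inj]
  · rw [Set.disjoint_left]
    rintro x ⟨y, -, rfl⟩ ⟨z, -, hz⟩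
    have := congrFun hz 0
    simp at this

lemma preimage_g_empty (W : Submodule (ZMod 2) (Fin (n+1) → ZMod 2))
    (hW : W ≤ LinearMap.range (emb n)) :
    (fun x => wvec n + emb n x) ⁻¹' (W : Set _) = ∅ := by
  ext x
  simp only [mem_preimage, mem_empty_iff_false, iff_false]
  intro h
  have := (mem_range_emb _).1 (hW h)
  simp at this

lemma preimage_g_eq (W : Submodule (ZMod 2) (Fin (n+1) → ZMod 2)) (v : Fin n → ZMod 2)
    (hu : wvec n + emb n v ∈ W) :
    (fun x => wvec n + emb n x) ⁻¹' (W : Set _) = {x | x + v ∈ comap (emb n) W} := by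
  ext x
  simp only [mem_preimage, SetLike.mem_coe, mem_setOf_eq, Submodule.mem_comap]
  have key : emb n (x + v) = (wvec n + emb n x) + (wvec n + emb n v) := by
    rw [map_add]
    have : wvec n + emb n x + (wvec n + emb n v)
        = (wvec n + wvec n) + (emb n x + emb n v) := by ring
    rw [this, addself]
    simp
  constructor
  · intro h; rw [key]; exact W.add_mem h hu
  · intro h
    have h2 : (wvec n + emb n x) = emb n (x + v) + (wvec n + emb n v) := by
      rw [key, add_assoc, addself, add_zero]
    rw [h2]
    exact W.add_mem h hu


lemma finrank_sup_span {K V : Type*} [Field K] [AddCommGroup V] [Module K V]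
    [FiniteDimensional K V] (U : Submodule K V) (x : V) (hx : x ∉ U) :
    finrank K ↥(U ⊔ span K {x}) = finrank K U + 1 := by
  have hx0 : x ≠ 0 := fun h => hx (h ▸ U.zero_mem)
  have h1 : finrank K ↥(span K {x}) = 1 := finrank_span_singleton hx0
  have h2 : U ⊓ span K {x} = ⊥ := by
    rw [← le_bot_iff]
    exact (Submodule.disjoint_span_singleton.2 (fun h => absurd h hx)).le_bot
  have := Submodule.finrank_sup_add_finrank_inf_eq U (span K {x})
  rw [h2, h1, finrank_bot] at this
  omega

lemma finrank_comap_of_le_range (W : Submodule (ZMod 2) (Fin (n+1) → ZMod 2))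
    (hW : W ≤ LinearMap.range (emb n)) :
    finrank (ZMod 2) ↥(comap (emb n) W) = finrank (ZMod 2) W := by
  have hmc : map (emb n) (comap (emb n) W) = W := by
    rw [Submodule.map_comap_eq, inf_eq_right.2 hW]
  have := LinearEquiv.finrank_eq (Submodule.equivMapOfInjective (emb n) emb_inj (comap (emb n) W))
  rw [hmc] at this
  exact this

lemma finrank_of_mem_notrange (W : Submodule (ZMod 2) (Fin (n+1) → ZMod 2))
    (u : Fin (n+1) → ZMod 2) (hu : u ∈ W) (hu0 : u 0 = 1) :
    finrank (ZMod 2) W = finrank (ZMod 2) ↥(comap (emb n) W) + 1 := by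
  set U' := LinearMap.range (emb n) ⊓ W with hU'
  have hmc : map (emb n) (comap (emb n) W) = U' := Submodule.map_comap_eq _ _
  have hfr : finrank (ZMod 2) ↥(comap (emb n) W) = finrank (ZMod 2) U' := by
    have := LinearEquiv.finrank_eq (Submodule.equivMapOfInjective (emb n) emb_inj (comap (emb n) W))
    rw [hmc] at this; exact this
  have hunot : u ∉ U' := by
    intro h
    have := (mem_range_emb u).1 h.1
    rw [hu0] at this; exact one_ne_zero this
  have hWeq : W = U' ⊔ span (ZMod 2) {u} := by
    apply le_antisymm
    · intro x hx
      rcases (by decide : ∀ a : ZMod 2, a = 0 ∨ a = 1) (x 0) with h0 | h1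
      · exact Submodule.mem_sup_left ⟨(mem_range_emb x).2 h0, hx⟩
      · have hxu : x + u ∈ U' := by
          refine ⟨(mem_range_emb _).2 ?_, W.add_mem hx hu⟩
          show x 0 + u 0 = 0
          rw [h1, hu0]; decide
        have : x = (x + u) + u := by rw [add_assoc, addself, add_zero]
        rw [this]
        exact Submodule.add_mem _ (Submodule.mem_sup_left hxu)
          (Submodule.mem_sup_right (Submodule.mem_span_singleton_self u))
    · refine sup_le inf_le_right ?_
      rw [Submodule.span_le, Set.singleton_subset_iff]
      exact hu
  rw [hfr, hWeq]
  exact finrank_sup_span U' u hunot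

lemma coset_self (U : Submodule (ZMod 2) (Fin n → ZMod 2)) (v : Fin n → ZMod 2) (hv : v ∈ U) :
    {x | x + v ∈ U} = (U : Set _) := by
  ext x
  simp only [mem_setOf_eq, SetLike.mem_coe]
  constructor
  · intro h
    have : x = (x + v) + v := by rw [add_assoc, addself, add_zero]
    rw [this]; exact U.add_mem h hv
  · intro h; exact U.add_mem h hv

lemma sup_span_coe (U : Submodule (ZMod 2) (Fin n → ZMod 2)) (v : Fin n → ZMod 2) :
    ((U ⊔ span (ZMod 2) {v} : Submodule (ZMod 2) _) : Set _) = ↑U ∪ {x | x + v ∈ U} := by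
  ext x
  simp only [SetLike.mem_coe, Submodule.mem_sup, mem_union, mem_setOf_eq]
  constructor
  · rintro ⟨a, ha, b, hb, rfl⟩
    rcases Submodule.mem_span_singleton.1 hb with ⟨c, rfl⟩
    rcases (by decide : ∀ a : ZMod 2, a = 0 ∨ a = 1) c with h0 | h1
    · left; rw [h0]; simpa using ha
    · right; rw [h1, one_smul, add_assoc, addself, add_zero]; exact ha
  · rintro (h | h)
    · exact ⟨x, h, 0, Submodule.zero_mem _, by rw [add_zero]⟩
    · exact ⟨x + v, h, v, Submodule.mem_span_singleton_self v,
        by rw [add_assoc, addself, add_zero]⟩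

lemma coset_disjoint (U : Submodule (ZMod 2) (Fin n → ZMod 2)) (v : Fin n → ZMod 2)
    (hv : v ∉ U) : Disjoint (↑U \ {0} : Set _) {x | x + v ∈ U} := by
  rw [Set.disjoint_left]
  rintro x ⟨hx, -⟩ hx2
  have hxU : x ∈ U := hx
  have : v = x + (x + v) := by rw [← add_assoc, addself, zero_add]
  exact hv (this ▸ U.add_mem hxU hx2)

lemma coset_zero_not_mem (U : Submodule (ZMod 2) (Fin n → ZMod 2)) (v : Fin n → ZMod 2)
    (hv : v ∉ U) : (0 : Fin n → ZMod 2) ∉ {x | x + v ∈ U} := by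
  intro h
  exact hv (by simpa using h)

lemma split_count (A : Set (Fin n → ZMod 2)) (U : Submodule (ZMod 2) (Fin n → ZMod 2))
    (v : Fin n → ZMod 2) (hv : v ∉ U) :
    (A ∩ (↑(U ⊔ span (ZMod 2) {v}) \ {0})).ncard
      = (A ∩ (↑U \ {0})).ncard + (A ∩ {x | x + v ∈ U}).ncard := by
  have hset : (↑(U ⊔ span (ZMod 2) {v}) \ {0} : Set (Fin n → ZMod 2))
      = (↑U \ {0}) ∪ {x | x + v ∈ U} := by
    rw [sup_span_coe]
    rw [Set.union_diff_distrib]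
    congr 1
    rw [Set.diff_singleton_eq_self (coset_zero_not_mem U v hv)]
  rw [hset, Set.inter_union_distrib_left]
  exact Set.ncard_union_eq (Set.disjoint_of_subset inter_subset_right inter_subset_right
    (coset_disjoint U v hv)) (Set.toFinite _) (Set.toFinite _)

lemma symmDiff_inter {α : Type*} (E D S : Set α) : (E ∆ D) ∩ S = (E ∩ S) ∆ (D ∩ S) := by
  ext x
  simp only [mem_inter_iff, Set.mem_symmDiff]
  tauto

lemma ncard_symmDiff_parity {α : Type*} [Fintype α] (X Y : Set α) :
    (X ∆ Y).ncard + 2 * (X ∩ Y).ncard = X.ncard + Y.ncard := by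
  have h1 : (X ∆ Y).ncard = (X \ Y).ncard + (Y \ X).ncard := by
    rw [Set.symmDiff_def]
    exact Set.ncard_union_eq disjoint_sdiff_sdiff (Set.toFinite _) (Set.toFinite _)
  have h2 : (X \ Y).ncard + (X ∩ Y).ncard = X.ncard := by
    rw [← Set.diff_self_inter]
    rw [Set.ncard_diff_add_ncard_of_subset inter_subset_left]
  have h3 : (Y \ X).ncard + (X ∩ Y).ncard = Y.ncard := by
    rw [Set.inter_comm, ← Set.diff_self_inter]
    rw [Set.ncard_diff_add_ncard_of_subset inter_subset_left]
  omega


lemma E'_zero (E D : Set (Fin n → ZMod 2)) (hE : 0 ∉ E) :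
    (0 : Fin (n+1) → ZMod 2) ∉
      (⇑(emb n) '' E ∪ (fun y => wvec n + y) '' (⇑(emb n) '' (E ∆ D))) := by
  rintro (⟨x, hx, h⟩ | ⟨y, ⟨x, hx, rfl⟩, h⟩)
  · apply hE
    have hx0 : x = 0 := by
      funext i
      have := congrFun h i.succ
      simpa using this
    rwa [hx0] at hx
  · have := congrFun h 0
    simp at this

lemma main (k : ℕ) (hk : 2 ≤ k) (E D : Set (Fin n → ZMod 2)) (hE : 0 ∉ E) (hD : 0 ∉ D)
    (hM : ∀ W : Submodule (ZMod 2) (Fin n → ZMod 2), k ≤ Module.finrank (ZMod 2) W →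
      Even ((E ∩ ((W : Set _) \ {0})).ncard)) :
    (∀ W : Submodule (ZMod 2) (Fin (n+1) → ZMod 2), k ≤ Module.finrank (ZMod 2) W →
      Even (((⇑(emb n) '' E ∪ (fun y => wvec n + y) '' (⇑(emb n) '' (E ∆ D))) ∩
        ((W : Set _) \ {0})).ncard))
    ↔ (∀ U : Submodule (ZMod 2) (Fin n → ZMod 2), k - 1 ≤ Module.finrank (ZMod 2) U →
      Even ((D ∩ ((U : Set _) \ {0})).ncard)) := by
  have hE'0 := E'_zero E D hE
  constructor
  · intro h U hU
    have hwnot : wvec n ∉ Submodule.map (emb n) U := by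
      rintro ⟨y, -, hy⟩
      have := congrFun hy 0
      simp at this
    have hfrmap : Module.finrank (ZMod 2) ↥(Submodule.map (emb n) U)
        = Module.finrank (ZMod 2) ↥U :=
      (LinearEquiv.finrank_eq (Submodule.equivMapOfInjective _ emb_inj U)).symm
    have hfrW : Module.finrank (ZMod 2)
        ↥(Submodule.map (emb n) U ⊔ Submodule.span (ZMod 2) {wvec n})
        = Module.finrank (ZMod 2) ↥U + 1 := by
      rw [finrank_sup_span _ _ hwnot, hfrmap]
    have hkW : k ≤ Module.finrank (ZMod 2)
        ↥(Submodule.map (emb n) U ⊔ Submodule.span (ZMod 2) {wvec n}) := by omega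
    have hp := h _ hkW
    have hcomap : Submodule.comap (emb n)
        (Submodule.map (emb n) U ⊔ Submodule.span (ZMod 2) {wvec n}) = U := by
      ext x
      simp only [Submodule.mem_comap]
      constructor
      · intro hx
        rcases Submodule.mem_sup.1 hx with ⟨a, ha, b, hb, heq⟩
        rcases Submodule.mem_span_singleton.1 hb with ⟨c, rfl⟩
        rcases ha with ⟨y, hy, rfl⟩
        have hc : c = 0 := by
          have h0 := congrFun heq 0
          simpa using h0
        rw [hc, zero_smul, add_zero] at heq
        rwa [← emb_inj heq]
      · intro hx
        exact Submodule.mem_sup_left (Submodule.mem_map_of_mem hx)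
    have h0 : wvec n + emb n 0 ∈
        Submodule.map (emb n) U ⊔ Submodule.span (ZMod 2) {wvec n} := by
      rw [map_zero, add_zero]
      exact Submodule.mem_sup_right (Submodule.mem_span_singleton_self _)
    rw [inter_diff_zero _ _ hE'0, count_inter, preimage_g_eq _ 0 h0, hcomap,
      coset_self U 0 U.zero_mem] at hp
    have hpre : ⇑(emb n) ⁻¹'
        ((Submodule.map (emb n) U ⊔ Submodule.span (ZMod 2) {wvec n} : Submodule (ZMod 2) _)
          : Set _) = (U : Set _) := by
      have h1 : ⇑(emb n) ⁻¹'
          ((Submodule.map (emb n) U ⊔ Submodule.span (ZMod 2) {wvec n} : Submodule (ZMod 2) _)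
            : Set _)
          = ((Submodule.comap (emb n)
              (Submodule.map (emb n) U ⊔ Submodule.span (ZMod 2) {wvec n})) : Set _) := rfl
      rw [h1, hcomap]
    rw [hpre] at hp
    rw [inter_diff_zero _ _ hD]
    have hpar := ncard_symmDiff_parity (E ∩ (U : Set _)) (D ∩ (U : Set _))
    rw [← symmDiff_inter] at hpar
    rw [Nat.even_iff] at hp ⊢
    omega
  · intro h W hkW
    rw [inter_diff_zero _ _ hE'0, count_inter]
    by_cases hle : W ≤ LinearMap.range (emb n)
    · rw [preimage_g_empty W hle, Set.inter_empty, Set.ncard_empty, add_zero]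
      have hfr := finrank_comap_of_le_range W hle
      have hm := hM (Submodule.comap (emb n) W) (by rw [hfr]; exact hkW)
      rw [inter_diff_zero _ _ hE] at hm
      exact hm
    · obtain ⟨u, huW, hur⟩ := SetLike.not_le_iff_exists.1 hle
      have hu0 : u 0 = 1 := by
        rcases (by decide : ∀ a : ZMod 2, a = 0 ∨ a = 1) (u 0) with h0 | h1
        · exact absurd ((mem_range_emb u).2 h0) hur
        · exact h1
      have huv : u = wvec n + emb n (Fin.tail u) := by
        funext i
        cases i using Fin.cases with
        | zero => simpa using hu0
        | succ j => simp [Fin.tail]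
      have hfr := finrank_of_mem_notrange W u huW hu0
      have hU : k - 1 ≤ Module.finrank (ZMod 2) ↥(Submodule.comap (emb n) W) := by omega
      rw [preimage_g_eq W (Fin.tail u) (huv ▸ huW)]
      have hpre : ⇑(emb n) ⁻¹' (W : Set _) = ((Submodule.comap (emb n) W : Submodule (ZMod 2) _) : Set _) := rfl
      rw [hpre]
      by_cases hvU : Fin.tail u ∈ Submodule.comap (emb n) W
      · rw [coset_self _ (Fin.tail u) hvU]
        have hDU := h (Submodule.comap (emb n) W) hU
        rw [inter_diff_zero _ _ hD] at hDU
        have hpar := ncard_symmDiff_parity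
          (E ∩ ((Submodule.comap (emb n) W : Submodule (ZMod 2) _) : Set _))
          (D ∩ ((Submodule.comap (emb n) W : Submodule (ZMod 2) _) : Set _))
        rw [← symmDiff_inter] at hpar
        rw [Nat.even_iff] at hDU ⊢
        omega
      · have hsE := split_count E _ _ hvU
        have hsD := split_count D _ _ hvU
        have hfr1 : Module.finrank (ZMod 2)
            ↥(Submodule.comap (emb n) W ⊔ Submodule.span (ZMod 2) {Fin.tail u})
            = Module.finrank (ZMod 2) ↥(Submodule.comap (emb n) W) + 1 :=
          finrank_sup_span _ _ hvU
        have hMU1 := hM (Submodule.comap (emb n) W ⊔ Submodule.span (ZMod 2) {Fin.tail u})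
          (by omega)
        have hDU1 := h (Submodule.comap (emb n) W ⊔ Submodule.span (ZMod 2) {Fin.tail u})
          (by omega)
        have hDU := h (Submodule.comap (emb n) W) hU
        have hpar := ncard_symmDiff_parity
          (E ∩ {x | x + Fin.tail u ∈ Submodule.comap (emb n) W})
          (D ∩ {x | x + Fin.tail u ∈ Submodule.comap (emb n) W})
        rw [← symmDiff_inter] at hpar
        have hEU : (E ∩ ((Submodule.comap (emb n) W : Submodule (ZMod 2) _) : Set _)).ncard
            = (E ∩ (((Submodule.comap (emb n) W : Submodule (ZMod 2) _) : Set _) \ {0})).ncard := by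
          rw [inter_diff_zero _ _ hE]
        rw [Nat.even_iff] at hMU1 hDU1 hDU ⊢
        omega

end Stmt7Aux

/-- Let `k ≥ 2` and let `M = (E, G)` and `N = (D, G)` be matroids of the
same dimension with `M ∈ ℰ_k`. Then the twist doubling of `M` by `N` belongs to `ℰ_k`
if and only if `N ∈ ℰ_{k−1}`. -/
theorem stmt7 {n : ℕ} (k : ℕ) (hk : 2 ≤ k) (E D : Set (Fin n → ZMod 2))
    (hE : 0 ∉ E) (hD : 0 ∉ D)
    (hM : BinMatroid.MemE k ⟨n, E, hE⟩) :
    BinMatroid.MemE k (twistDouble E D hE) ↔ BinMatroid.MemE (k - 1) ⟨n, D, hD⟩ := by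
  exact Stmt7Aux.main k hk E D hE hD hM
end

section
/- Let M = (E, G) ∈ ℰ₃ with χ(M) ≥ 3. Then for every hyperplane H of G, the matroid M is a semidoubling of M|H. -/
/-!
Fix `w ∉ H ∪ E`. Applying `E ∈ ℰ₃` to the flat spanned by `x, y, w` shows that
`z ↦ |{z, z + w} ∩ E| mod 2` is a linear functional; if it does not vanish on `H`, its kernel
in `H` is the hyperplane `H₀` of a semidoubling. If it vanishes on `H` for every such `w`, the
complement of `E` is closed under addition, so `E = G − K` for a subspace `K`. Since `χ(M) ≥ 3`,
a complement `C` of `K` has dimension at least `3`, and `E ∩ C` consists of all `2 ^ dim C - 1`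
nonzero points of `C`, an odd number, contradicting `E ∈ ℰ₃`.
-/

open Module Submodule

theorem Set.ncard_pair_inter_eq_zero_or_two {α : Type*} {a b : α} {E : Set α} (hab : a ≠ b)
    (h : a ∈ E ↔ b ∈ E) : ({a, b} ∩ E).ncard = 0 ∨ ({a, b} ∩ E).ncard = 2 := by
  by_cases ha : a ∈ E
  · simp [Set.insert_inter_of_mem, ha, h.mp ha, Set.ncard_pair hab]
  · simp [Set.insert_inter_of_notMem, ha, mt h.mpr ha]

theorem Set.ncard_pair_inter_eq_one {α : Type*} {a b : α} {E : Set α}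
    (h : ¬(a ∈ E ↔ b ∈ E)) : ({a, b} ∩ E).ncard = 1 := by
  by_cases ha : a ∈ E
  · simp [Set.insert_inter_of_mem, ha, show b ∉ E by tauto]
  · simp [Set.insert_inter_of_notMem, ha, show b ∈ E by tauto]

section LinearAlgebra

variable {K V : Type*} [Field K] [AddCommGroup V] [Module K V] [FiniteDimensional K V]

theorem Submodule.finrank_inf_ker_add_one {H : Submodule K V} {f : V →ₗ[K] K} {x : V}
    (hxH : x ∈ H) (hfx : f x ≠ 0) : finrank K ↥(H ⊓ LinearMap.ker f) + 1 = finrank K H := by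
  have hf : f.domRestrict H ≠ 0 := fun h => hfx (by simpa using LinearMap.congr_fun h ⟨x, hxH⟩)
  rw [← Module.Dual.finrank_ker_add_one_of_ne_zero hf, ← map_comap_subtype,
    finrank_map_subtype_eq, LinearMap.ker_domRestrict]

end LinearAlgebra

section ZModTwo

variable {V : Type*} [AddCommGroup V] [Module (ZMod 2) V]

theorem Submodule.add_mem_of_notMem_of_notMem [FiniteDimensional (ZMod 2) V]
    {H : Submodule (ZMod 2) V} (hH : finrank (ZMod 2) H + 1 = finrank (ZMod 2) V) {a b : V}
    (ha : a ∉ H) (hb : b ∉ H) : a + b ∈ H := by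
  have htop : H ⊔ (ZMod 2) ∙ a = ⊤ := by
    apply eq_top_of_finrank_eq
    have := finrank_lt_finrank_of_lt (lt_sup_iff_notMem.mpr ha)
    have := (H ⊔ (ZMod 2) ∙ a).finrank_le
    omega
  have hb' : b ∈ H ⊔ (ZMod 2) ∙ a := htop ▸ mem_top
  obtain ⟨h, hh, y, hy, rfl⟩ := mem_sup.mp hb'
  obtain ⟨c, rfl⟩ := mem_span_singleton.mp hy
  rcases (by decide : ∀ c : ZMod 2, c = 0 ∨ c = 1) c with rfl | rfl
  · simp_all
  · simpa [add_left_comm a h a, ZModModule.add_self] using hh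

theorem exists_submodule_forall_mem_iff_notMem {E : Set V} (h0 : (0 : V) ∉ E)
    (hadd : ∀ a b, a ∉ E → b ∉ E → a + b ∉ E) :
    ∃ K : Submodule (ZMod 2) V, ∀ z, z ∈ E ↔ z ∉ K :=
  ⟨AddSubgroup.toZModSubmodule 2
    { carrier := Eᶜ
      add_mem' := hadd _ _
      zero_mem' := h0
      neg_mem' := by simp [ZModModule.neg_eq_self] },
    fun z => by simp⟩

end ZModTwo

namespace BinMatroid

variable {M : BinMatroid}

theorem critNum_le_of_disjoint {K : Submodule (ZMod 2) (Fin M.dim → ZMod 2)}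
    (hK : Disjoint ((K : Set (Fin M.dim → ZMod 2)) \ {0}) M.E) :
    M.critNum ≤ M.dim - finrank (ZMod 2) K := by
  have hle : finrank (ZMod 2) K ≤ M.dim := by simpa using K.finrank_le
  exact Nat.sInf_le ⟨K, by omega, hK⟩

theorem critNum_lt_of_memE_of_eq_compl {k : ℕ} (hk : 0 < k) (hM : M.MemE k)
    (K : Submodule (ZMod 2) (Fin M.dim → ZMod 2)) (hK : ∀ z, z ∈ M.E ↔ z ∉ K) :
    M.critNum < k := by
  by_contra! hχ
  have hKE : Disjoint ((K : Set (Fin M.dim → ZMod 2)) \ {0}) M.E :=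
    Set.disjoint_left.mpr fun z hz hzE => (hK z).mp hzE hz.1
  obtain ⟨C, hC⟩ := K.exists_isCompl
  have hdim := finrank_add_eq_of_isCompl hC
  have hcrit := critNum_le_of_disjoint hKE
  simp only [Module.finrank_fin_fun] at hdim
  have hCE : M.E ∩ ((C : Set (Fin M.dim → ZMod 2)) \ {0}) = (C : Set _) \ {0} := by
    refine Set.inter_eq_right.mpr fun z ⟨hzC, hz0⟩ => (hK z).mpr fun hzK => hz0 ?_
    exact (disjoint_def.mp hC.disjoint) z hzK hzC
  have heven := hM C (by omega)
  rw [hCE, Set.ncard_sdiff_singleton_of_mem C.zero_mem, ← Nat.card_coe_set_eq,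
    SetLike.coe_sort_coe, Module.natCard_eq_pow_finrank (K := ZMod 2), Nat.card_zmod] at heven
  have hC0 : finrank (ZMod 2) C ≠ 0 := by omega
  rw [Nat.even_sub' Nat.one_le_two_pow, iff_true_right odd_one] at heven
  exact Nat.not_even_iff_odd.mpr heven (Nat.even_pow.mpr ⟨even_two, hC0⟩)

noncomputable def indicator (M : BinMatroid) : (Fin M.dim → ZMod 2) → ZMod 2 :=
  M.E.indicator 1

theorem indicator_of_mem {z : Fin M.dim → ZMod 2} (h : z ∈ M.E) : M.indicator z = 1 :=
  Set.indicator_of_mem h _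

theorem indicator_of_notMem {z : Fin M.dim → ZMod 2} (h : z ∉ M.E) : M.indicator z = 0 :=
  Set.indicator_of_notMem h _

theorem indicator_add_indicator_eq_zero_iff {a b : Fin M.dim → ZMod 2} :
    M.indicator a + M.indicator b = 0 ↔ (a ∈ M.E ↔ b ∈ M.E) := by
  by_cases ha : a ∈ M.E <;> by_cases hb : b ∈ M.E <;> simp [indicator, ha, hb]; decide

/-- The sum over `U` counts each point of `E` in the flat `range φ` exactly `|ker φ|` times. -/
theorem sum_indicator_comp_eq_zero_s10 {k : ℕ} (hM : M.MemE k) {U : Type*} [AddCommGroup U]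
    [Module (ZMod 2) U] [Fintype U] (φ : U →ₗ[ZMod 2] (Fin M.dim → ZMod 2))
    (hk : k ≤ finrank (ZMod 2) U) :
    ∑ u, M.indicator (φ u) = 0 := by
  classical
  by_cases hφ : Function.Injective φ
  · have himage : M.E ∩ ((LinearMap.range φ : Set (Fin M.dim → ZMod 2)) \ {0}) =
        φ '' {u | φ u ∈ M.E} := by
      ext z
      simp only [Set.mem_inter_iff, Set.mem_sdiff, SetLike.mem_coe, LinearMap.mem_range,
        Set.mem_singleton_iff, Set.mem_image, Set.mem_ofPred_eq]
      constructor
      · rintro ⟨hz, ⟨u, rfl⟩, -⟩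
        exact ⟨u, hz, rfl⟩
      · rintro ⟨u, hu, rfl⟩
        exact ⟨hu, ⟨u, rfl⟩, fun h => M.zero_not_mem (h ▸ hu)⟩
    have heven := hM (LinearMap.range φ) (by rwa [LinearMap.finrank_range_of_inj hφ])
    rw [himage, Set.ncard_image_of_injective _ hφ, Set.ncard_eq_toFinset_card'] at heven
    rw [← (ZMod.natCast_eq_zero_iff_even).mpr heven, indicator]
    simp [Set.indicator_apply]
  · obtain ⟨k, hφk, hk0⟩ : ∃ k, φ k = 0 ∧ k ≠ 0 := by
      simpa [← LinearMap.ker_eq_bot, Submodule.ne_bot_iff] using hφ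
    refine Finset.sum_ninvolution (· + k) (fun u => ?_) (fun u _ => by simpa using hk0)
      (fun _ => Finset.mem_univ _) (fun u => by simp [add_assoc, ZModModule.add_self])
    rw [map_add, hφk, add_zero, CharTwo.add_self_eq_zero]

theorem indicator_cube (hM : M.MemE 3) (x y w : Fin M.dim → ZMod 2) :
    M.indicator x + M.indicator y + M.indicator (x + y) + M.indicator w + M.indicator (x + w) +
      M.indicator (y + w) + M.indicator (x + y + w) = 0 := by
  let φ : (ZMod 2 × ZMod 2 × ZMod 2) →ₗ[ZMod 2] (Fin M.dim → ZMod 2) :=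
    (LinearMap.toSpanSingleton _ _ x).coprod
      ((LinearMap.toSpanSingleton _ _ y).coprod (LinearMap.toSpanSingleton _ _ w))
  have h := sum_indicator_comp_eq_zero_s10 hM φ (by simp)
  have huniv : (Finset.univ : Finset (ZMod 2)) = {0, 1} := rfl
  simp only [φ, Fintype.sum_prod_type, huniv, LinearMap.coprod_apply,
    LinearMap.toSpanSingleton_apply] at h
  simp only [Finset.mem_singleton, zero_ne_one, not_false_eq_true, Finset.sum_insert,
    Finset.sum_singleton, zero_smul, one_smul, add_zero, zero_add,
    indicator_of_notMem M.zero_not_mem] at h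
  rw [add_assoc x y w]
  linear_combination h

noncomputable def pairParity (hM : M.MemE 3) {w : Fin M.dim → ZMod 2} (hw : w ∉ M.E) :
    (Fin M.dim → ZMod 2) →ₗ[ZMod 2] ZMod 2 :=
  AddMonoidHom.toZModLinearMap 2 <| AddMonoidHom.mk'
    (fun z => M.indicator z + M.indicator (z + w)) fun a b => by
      have h := indicator_cube hM a b w
      rw [indicator_of_notMem hw] at h
      linear_combination (norm := ring_nf) h
      reduce_mod_char

theorem pairParity_eq_zero_iff (hM : M.MemE 3) {w : Fin M.dim → ZMod 2} (hw : w ∉ M.E)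
    {z : Fin M.dim → ZMod 2} : pairParity hM hw z = 0 ↔ (z ∈ M.E ↔ z + w ∈ M.E) :=
  indicator_add_indicator_eq_zero_iff

theorem isSemidoublingOfRes_of_not_iff (hM : M.MemE 3)
    {H : Submodule (ZMod 2) (Fin M.dim → ZMod 2)} {w x : Fin M.dim → ZMod 2} (hwH : w ∉ H)
    (hwE : w ∉ M.E) (hxH : x ∈ H) (hx : ¬(x ∈ M.E ↔ x + w ∈ M.E)) :
    IsSemidoublingOfRes M.E H := by
  have hw0 : w ≠ 0 := fun h => hwH (h ▸ H.zero_mem)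
  refine ⟨H ⊓ LinearMap.ker (pairParity hM hwE), inf_le_left,
    finrank_inf_ker_add_one hxH (mt (pairParity_eq_zero_iff hM hwE).mp hx), w, hw0, hwH, hwE,
    fun z ⟨hz, _⟩ => ?_, fun z ⟨hzH, hz⟩ => ?_⟩
  · exact Set.ncard_pair_inter_eq_zero_or_two (by simpa using hw0)
      ((pairParity_eq_zero_iff hM hwE).mp (mem_inf.mp hz).2)
  · exact Set.ncard_pair_inter_eq_one fun h =>
      hz (mem_inf.mpr ⟨hzH, (pairParity_eq_zero_iff hM hwE).mpr h⟩)

theorem add_notMem_of_forall_notMem_mem (hM : M.MemE 3)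
    {H : Submodule (ZMod 2) (Fin M.dim → ZMod 2)} (hHE : ∀ v, v ∉ H → v ∈ M.E)
    {v a b : Fin M.dim → ZMod 2} (hvH : v ∉ H) (haH : a ∈ H) (hbH : b ∈ H) (ha : a ∉ M.E)
    (hb : b ∉ M.E) : a + b ∉ M.E := by
  have add_mem_E {x} (hx : x ∈ H) : x + v ∈ M.E := hHE _ ((H.add_mem_iff_right hx).not.mpr hvH)
  have h := indicator_cube hM a b v
  rw [indicator_of_notMem ha, indicator_of_notMem hb, indicator_of_mem (hHE v hvH),
    indicator_of_mem (add_mem_E haH), indicator_of_mem (add_mem_E hbH),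
    indicator_of_mem (add_mem_E (H.add_mem haH hbH))] at h
  intro hab
  rw [indicator_of_mem hab] at h
  exact absurd h (by decide)

theorem add_notMem_of_forall_iff (hM : M.MemE 3) {H : Submodule (ZMod 2) (Fin M.dim → ZMod 2)}
    (hH : finrank (ZMod 2) H + 1 = M.dim)
    (hP : ∀ w, w ∉ H → w ∉ M.E → ∀ z ∈ H, (z ∈ M.E ↔ z + w ∈ M.E))
    {a b : Fin M.dim → ZMod 2} (ha : a ∉ M.E) (hb : b ∉ M.E) : a + b ∉ M.E := by
  have mixed {a b} (haH : a ∈ H) (hbH : b ∉ H) (ha : a ∉ M.E) (hb : b ∉ M.E) : a + b ∉ M.E :=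
    fun h => ha ((hP b hbH hb a haH).mpr h)
  have outer {a b} (haH : a ∉ H) (hbH : b ∉ H) (ha : a ∉ M.E) (hb : b ∉ M.E) : a + b ∉ M.E := by
    intro h
    have habH := add_mem_of_notMem_of_notMem (by simpa using hH) haH hbH
    refine hb ?_
    simpa [add_comm a b, add_assoc, ZModModule.add_self] using (hP a haH ha _ habH).mp h
  by_cases haH : a ∈ H <;> by_cases hbH : b ∈ H
  · by_cases hw : ∃ w, w ∉ H ∧ w ∉ M.E
    · obtain ⟨w, hwH, hwE⟩ := hw
      -- `a + b = (b + (a + w)) + w`, and `a + w`, `b + (a + w)` also lie off `H ∪ E`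
      have hawH : a + w ∉ H := (H.add_mem_iff_right haH).not.mpr hwH
      have h := outer ((H.add_mem_iff_right hbH).not.mpr hawH) hwH
        (mixed hbH hawH hb (mixed haH hwH ha hwE)) hwE
      rwa [add_comm b, add_assoc, add_assoc, add_left_comm w b w, ZModModule.add_self,
        add_zero] at h
    · obtain ⟨v, hvH⟩ : ∃ v, v ∉ H := by
        by_contra! hall
        rw [show H = ⊤ from eq_top_iff'.mpr hall, finrank_top, finrank_fin_fun] at hH
        omega
      exact add_notMem_of_forall_notMem_mem hM
        (fun v hvH => not_not.mp fun hvE => hw ⟨v, hvH, hvE⟩) hvH haH hbH ha hb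
  · exact mixed haH hbH ha hb
  · rw [add_comm]
    exact mixed hbH haH hb ha
  · exact outer haH hbH ha hb

end BinMatroid

/-- If `M = (E, G) ∈ ℰ₃` and `χ(M) ≥ 3`, then for every hyperplane `H`
of `G` the matroid `M` is a semidoubling of `M|H`. -/
theorem stmt10 (M : BinMatroid) (hM : M.MemE 3) (hchi : 3 ≤ M.critNum)
    (H : Submodule (ZMod 2) (Fin M.dim → ZMod 2))
    (hH : Module.finrank (ZMod 2) H + 1 = M.dim) :
    BinMatroid.IsSemidoublingOfRes M.E H := by
  by_contra hnot
  have hP : ∀ w, w ∉ H → w ∉ M.E → ∀ z ∈ H, (z ∈ M.E ↔ z + w ∈ M.E) :=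
    fun w hwH hwE z hz => not_not.mp fun h =>
      hnot (BinMatroid.isSemidoublingOfRes_of_not_iff hM hwH hwE hz h)
  obtain ⟨K, hK⟩ := exists_submodule_forall_mem_iff_notMem M.zero_not_mem
    fun a b => BinMatroid.add_notMem_of_forall_iff hM hH hP
  exact (BinMatroid.critNum_lt_of_memE_of_eq_compl three_pos hM K hK).not_ge hchi
end
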